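/- arXiv:2602.24167 — 10 statements merged into one kernel-verified Lean document; each statement's English description precedes it below -/
import Mathlib

section
/- Let K be a field and let L be a finite-dimensional Lie algebra over K whose center is contained in its derived subalgebra, i.e. Z(L) ⊆ [L,L]. Suppose f, g, h : L → L are Lie algebra endomorphisms with f = g + h (pointwise sum) and h is central, i.e. h(L) ⊆ Z(L). Then det f = det g (determinants of the underlying linear maps). In particular, f is a Lie algebra automorphism if and only if g is. -/
/-!
A central endomorphism `h` kills every bracket, since `h ⁅x, y⁆ = ⁅h x, h y⁆ = 0`; so `f = g + h`
agrees with `g` on the derived algebra `D = ⁅L, L⁆`, which both preserve. Because `h` takes values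
in `Z(L) ⊆ D`, `f` and `g` also induce the same map on `L ⧸ D`. The determinant of an endomorphism
preserving `D` is the product of the determinants on `D` and on `L ⧸ D`, so `det f = det g`.
-/

namespace LinearMap

variable {K V : Type*} [Field K] [AddCommGroup V] [Module K V] [FiniteDimensional K V]

theorem det_eq_det_of_eqOn_of_sub_mem (W : Submodule K V) {e₁ e₂ : V →ₗ[K] V}
    (h₁ : W ≤ W.comap e₁) (heq : ∀ x ∈ W, e₁ x = e₂ x)
    (hsub : ∀ x, e₁ x - e₂ x ∈ W) :
    e₁.det = e₂.det := by
  have h₂ : W ≤ W.comap e₂ := fun x hx ↦ by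
    simpa only [Submodule.mem_comap, ← heq x hx] using h₁ hx
  have hrestrict : e₁.restrict h₁ = e₂.restrict h₂ := by
    ext x
    exact heq x x.2
  have hmapQ : W.mapQ W e₁ h₁ = W.mapQ W e₂ h₂ := by
    refine Submodule.linearMap_qext W (LinearMap.ext fun x ↦ ?_)
    exact (Submodule.Quotient.eq W).2 (hsub x)
  rw [det_eq_det_mul_det W e₁ h₁, det_eq_det_mul_det W e₂ h₂, hrestrict, hmapQ]

theorem bijective_iff_det_ne_zero (e : V →ₗ[K] V) : Function.Bijective e ↔ e.det ≠ 0 := by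
  rw [← Module.End.isUnit_iff, isUnit_iff_isUnit_det, isUnit_iff_ne_zero]

end LinearMap

namespace LieHom

variable {R L L' : Type*} [CommRing R] [LieRing L] [LieAlgebra R L]
  [LieRing L'] [LieAlgebra R L']

theorem derivedAlgebra_le_comap (f : L →ₗ⁅R⁆ L') :
    ⁅(⊤ : LieIdeal R L), ⊤⁆ ≤ LieIdeal.comap f ⁅(⊤ : LieIdeal R L'), ⊤⁆ :=
  (LieSubmodule.lie_le_iff _ _ _).2 fun x _ y _ ↦ by
    rw [LieIdeal.mem_comap, LieHom.map_lie]
    exact LieSubmodule.lie_mem_lie trivial trivial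

theorem derivedAlgebra_le_ker_of_mem_center (h : L →ₗ⁅R⁆ L')
    (hcentral : ∀ x, h x ∈ LieAlgebra.center R L') :
    ⁅(⊤ : LieIdeal R L), ⊤⁆ ≤ h.ker :=
  (LieSubmodule.lie_le_iff _ _ _).2 fun x _ y _ ↦ by
    rw [LieHom.mem_ker, LieHom.map_lie]
    exact (LieModule.mem_maxTrivSubmodule R L' L' (h y)).1 (hcentral y) (h x)

end LieHom

/-- Let `L` be a finite-dimensional Lie algebra over a field `K` whose center
is contained in its derived subalgebra.  If `f = g + h` (pointwise) for Lie algebra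
endomorphisms `f, g, h` of `L` with `h` central, then `det f = det g`; in particular `f` is
a Lie algebra automorphism if and only if `g` is. -/
theorem stmt0 {K L : Type*} [Field K] [LieRing L] [LieAlgebra K L]
    [FiniteDimensional K L]
    (hZ : LieAlgebra.center K L ≤ ⁅(⊤ : LieIdeal K L), (⊤ : LieIdeal K L)⁆)
    (f g h : L →ₗ⁅K⁆ L)
    (hsum : ∀ x : L, f x = g x + h x)
    (hcentral : ∀ x : L, h x ∈ LieAlgebra.center K L) :
    LinearMap.det (f : L →ₗ[K] L) = LinearMap.det (g : L →ₗ[K] L) ∧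
      (Function.Bijective f ↔ Function.Bijective g) := by
  have hdet : LinearMap.det (f : L →ₗ[K] L) = LinearMap.det (g : L →ₗ[K] L) := by
    refine LinearMap.det_eq_det_of_eqOn_of_sub_mem
      (⁅(⊤ : LieIdeal K L), ⊤⁆ : LieIdeal K L).toSubmodule
      (fun x hx ↦ f.derivedAlgebra_le_comap hx) (fun x hx ↦ ?_) (fun x ↦ ?_)
    · have hker : h x = 0 := h.derivedAlgebra_le_ker_of_mem_center hcentral hx
      simp [hsum x, hker]
    · simpa [hsum x] using hZ (hcentral x)
  refine ⟨hdet, ?_⟩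
  rw [← LieHom.coe_toLinearMap f, ← LieHom.coe_toLinearMap g,
    LinearMap.bijective_iff_det_ne_zero, LinearMap.bijective_iff_det_ne_zero, hdet]
end

section
/- Let K be a field and L a finite-dimensional Lie algebra over K. Then L has no nonzero abelian direct summand (i.e. there is no decomposition L = A ⊕ H into a direct sum of two ideals with A nonzero abelian) if and only if Z(L) ⊆ [L,L]. -/
/-!
An abelian direct summand `A` of `L = A ⊕ H` is central, since `⁅H, A⁆ ≤ H ⊓ A = 0`; then
`⁅L, L⁆ = ⁅L, H⁆ ≤ H`, so `A ⊓ ⁅L, L⁆ = 0` and `Z(L) ⊆ [L, L]` forces `A = 0`. Conversely, a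
central `z ∉ ⁅L, L⁆` spans a central line, hence an ideal, and any linear complement of it
containing `⁅L, L⁆` is an ideal too, because every subspace containing `⁅L, L⁆` is one.
-/

namespace LieIdeal

open LieAlgebra LieSubmodule

variable {R L : Type*} [CommRing R] [LieRing L] [LieAlgebra R L]

def ofLieTopTopLE (p : Submodule R L)
    (hp : ((⁅(⊤ : LieIdeal R L), ⊤⁆ : LieIdeal R L) : Submodule R L) ≤ p) : LieIdeal R L where
  toSubmodule := p
  lie_mem {x m} _ := hp (lie_mem_lie (mem_top x) (mem_top m))

def ofLECenter (p : Submodule R L) (hp : p ≤ center R L) : LieIdeal R L where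
  toSubmodule := p
  lie_mem {x _} hm := (hp hm x).symm ▸ p.zero_mem

theorem le_center_of_lie_self_eq_bot {A H : LieIdeal R L} (hA : ⁅A, A⁆ = ⊥) (hinf : A ⊓ H = ⊥)
    (hsup : A ⊔ H = ⊤) : A ≤ center R L := by
  rw [LieModule.le_max_triv_iff_bracket_eq_bot R L L, ← hsup, sup_lie, hA, bot_sup_eq,
    ← le_bot_iff, ← hinf, inf_comm]
  exact lie_le_inf H A

theorem lie_top_top_le_of_le_center {A H : LieIdeal R L} (hA : A ≤ center R L)
    (hsup : A ⊔ H = ⊤) : ⁅(⊤ : LieIdeal R L), ⊤⁆ ≤ H :=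
  calc ⁅(⊤ : LieIdeal R L), ⊤⁆ = ⁅⊤, A ⊔ H⁆ := by rw [hsup]
    _ = ⁅⊤, H⁆ := by
      rw [lie_sup, (LieModule.le_max_triv_iff_bracket_eq_bot R L L).mp hA, bot_sup_eq]
    _ ≤ H := lie_le_right H ⊤

theorem exists_central_summand_of_not_center_le {K : Type*} [Field K] [LieAlgebra K L]
    (h : ¬ center K L ≤ ⁅(⊤ : LieIdeal K L), ⊤⁆) :
    ∃ A H : LieIdeal K L, A ≠ ⊥ ∧ A ≤ center K L ∧ A ⊓ H = ⊥ ∧ A ⊔ H = ⊤ := by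
  obtain ⟨z, hz, hz_derived⟩ := SetLike.not_le_iff_exists.mp h
  have hline : K ∙ z ≤ (center K L : Submodule K L) :=
    (Submodule.span_singleton_le_iff_mem _ _).mpr hz
  obtain ⟨C, hC_derived, hC⟩ :=
    (Submodule.disjoint_span_singleton_of_notMem hz_derived).exists_isCompl
  refine ⟨ofLECenter _ hline, ofLieTopTopLE C hC_derived, ?_, hline, ?_, ?_⟩
  · intro hbot
    have hz_line : z ∈ ofLECenter _ hline := Submodule.mem_span_singleton_self z
    rw [hbot, mem_bot] at hz_line
    exact hz_derived (hz_line ▸ zero_mem _)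
  · exact (toSubmodule_inj _ _).mp hC.symm.inf_eq_bot
  · exact (toSubmodule_inj _ _).mp hC.symm.sup_eq_top

end LieIdeal

theorem stmt1_general (K L : Type*) [Field K] [LieRing L] [LieAlgebra K L] :
    (¬ ∃ A H : LieIdeal K L, A ≠ ⊥ ∧ (∀ x ∈ A, ∀ y ∈ A, ⁅x, y⁆ = 0) ∧
        A ⊓ H = ⊥ ∧ A ⊔ H = ⊤) ↔
      LieAlgebra.center K L ≤ ⁅(⊤ : LieIdeal K L), (⊤ : LieIdeal K L)⁆ := by
  constructor
  · intro hno
    by_contra hle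
    obtain ⟨A, H, hA_ne, hA_center, hinf, hsup⟩ :=
      LieIdeal.exists_central_summand_of_not_center_le hle
    exact hno ⟨A, H, hA_ne, fun x _ y hy => hA_center hy x, hinf, hsup⟩
  · rintro hcenter ⟨A, H, hA_ne, hA_abelian, hinf, hsup⟩
    have hA_center : A ≤ LieAlgebra.center K L :=
      LieIdeal.le_center_of_lie_self_eq_bot ((LieSubmodule.lie_eq_bot_iff A A).mpr hA_abelian)
        hinf hsup
    have hAH : A ≤ H :=
      hA_center.trans (hcenter.trans (LieIdeal.lie_top_top_le_of_le_center hA_center hsup))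
    exact hA_ne (by rw [← hinf, inf_eq_left.mpr hAH])

/-- A finite-dimensional Lie algebra `L` over a field `K` has no nonzero
abelian direct summand (no decomposition `L = A ⊕ H` into two ideals with `A` nonzero
abelian) if and only if `Z(L) ⊆ [L, L]`. -/
theorem stmt1 (K L : Type*) [Field K] [LieRing L] [LieAlgebra K L]
    [FiniteDimensional K L] :
    (¬ ∃ A H : LieIdeal K L, A ≠ ⊥ ∧ (∀ x ∈ A, ∀ y ∈ A, ⁅x, y⁆ = 0) ∧
        A ⊓ H = ⊥ ∧ A ⊔ H = ⊤) ↔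
      LieAlgebra.center K L ≤ ⁅(⊤ : LieIdeal K L), (⊤ : LieIdeal K L)⁆ :=
  stmt1_general K L
end

section
/- Let L be a finite-dimensional Lie algebra over a field K and let f : L → L be a normal Lie algebra endomorphism, i.e. f([X,Y]) = [f(X),Y] for all X, Y ∈ L. Then there exists N ≥ 1 such that L = Ker(f^N) ⊕ f^N(L), a direct sum of Lie ideals of L. -/
/-!
Normality of `f` passes to its powers and, by antisymmetry of the bracket, also holds in the
second argument: `f ⁅X, Y⁆ = ⁅X, f Y⁆`. Hence the kernel and the image of every power of `f`
are Lie ideals. The Fitting lemma for the underlying linear endomorphism of the Artinian and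
Noetherian module `L` then says that `L = Ker (f ^ N) ⊕ Im (f ^ N)` for all large `N`.
-/

namespace LieAlgebra

variable {R L : Type*} [CommRing R] [LieRing L] [LieAlgebra R L]

def IsNormalEnd (g : Module.End R L) : Prop :=
  ∀ X Y : L, g ⁅X, Y⁆ = ⁅g X, Y⁆

namespace IsNormalEnd

variable {g : Module.End R L}

theorem pow (hg : IsNormalEnd g) (n : ℕ) : IsNormalEnd (g ^ n) := by
  intro X Y
  induction n with
  | zero => simp
  | succ n ih => rw [pow_succ', Module.End.mul_apply, ih, hg, Module.End.mul_apply]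

theorem map_lie_eq_lie_map (hg : IsNormalEnd g) (X Y : L) : g ⁅X, Y⁆ = ⁅X, g Y⁆ := by
  rw [← lie_skew, map_neg, hg, lie_skew]

def kerIdeal (hg : IsNormalEnd g) : LieIdeal R L :=
  { LinearMap.ker g with
    lie_mem := fun {X Y} (hY : g Y = 0) =>
      show g ⁅X, Y⁆ = 0 by rw [hg.map_lie_eq_lie_map, hY, lie_zero] }

def rangeIdeal (hg : IsNormalEnd g) : LieIdeal R L :=
  { LinearMap.range g with
    lie_mem := by
      rintro X _ ⟨Z, rfl⟩
      exact ⟨⁅X, Z⁆, hg.map_lie_eq_lie_map X Z⟩ }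

theorem eventually_isCompl_kerIdeal_pow_rangeIdeal_pow [IsArtinian R L] [IsNoetherian R L]
    (hg : IsNormalEnd g) :
    ∀ᶠ n in Filter.atTop, IsCompl (hg.pow n).kerIdeal (hg.pow n).rangeIdeal := by
  filter_upwards [g.eventually_isCompl_ker_pow_range_pow] with n hn
  rwa [← LieSubmodule.isCompl_toSubmodule]

end IsNormalEnd

end LieAlgebra

/-- **Fitting lemma for normal endomorphisms.** If `f` is a normal endomorphism
(`f ⁅X, Y⁆ = ⁅f X, Y⁆`) of a finite-dimensional Lie algebra `L`, then there is `N ≥ 1` such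
that `L = Ker (f ^ N) ⊕ Im (f ^ N)`, a direct sum of Lie ideals. -/
theorem stmt2 {K L : Type*} [Field K] [LieRing L] [LieAlgebra K L]
    [FiniteDimensional K L]
    (f : L →ₗ⁅K⁆ L) (hf : ∀ X Y : L, f ⁅X, Y⁆ = ⁅f X, Y⁆) :
    ∃ N : ℕ, 1 ≤ N ∧ ∃ I J : LieIdeal K L,
      (I : Submodule K L) = LinearMap.ker ((f : L →ₗ[K] L) ^ N) ∧
      (J : Submodule K L) = LinearMap.range ((f : L →ₗ[K] L) ^ N) ∧
      I ⊓ J = ⊥ ∧ I ⊔ J = ⊤ := by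
  have hnormal : LieAlgebra.IsNormalEnd (f : L →ₗ[K] L) := hf
  obtain ⟨N, hcompl, hN⟩ := (hnormal.eventually_isCompl_kerIdeal_pow_rangeIdeal_pow.and
    (Filter.eventually_ge_atTop 1)).exists
  exact ⟨N, hN, _, _, rfl, rfl, hcompl.inf_eq_bot, hcompl.sup_eq_top⟩
end

section
/- Let L be a finite-dimensional Lie algebra over a field K that is directly indecomposable, i.e. L ≠ 0 and whenever L = I ⊕ J is a direct sum of two ideals, I = 0 or J = 0. Then every normal Lie algebra endomorphism f of L (meaning f([X,Y]) = [f(X),Y] for all X,Y ∈ L) is either invertible or nilpotent as a linear map. -/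
/-- A Lie algebra is directly indecomposable if it is nonzero and admits no decomposition
as a direct sum of two nonzero ideals. -/
def LieDirectlyIndecomposable (K M : Type*) [Field K] [LieRing M] [LieAlgebra K M] : Prop :=
  Nontrivial M ∧
    ∀ I J : LieIdeal K M, I ⊓ J = ⊥ → I ⊔ J = ⊤ → I = ⊥ ∨ J = ⊥

/-- Every normal endomorphism (`f ⁅X, Y⁆ = ⁅f X, Y⁆`) of a
finite-dimensional directly indecomposable Lie algebra is either invertible or nilpotent
as a linear map. -/
theorem stmt3 {K L : Type*} [Field K] [LieRing L] [LieAlgebra K L]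
    [FiniteDimensional K L]
    (hL : LieDirectlyIndecomposable K L)
    (f : L →ₗ⁅K⁆ L) (hf : ∀ X Y : L, f ⁅X, Y⁆ = ⁅f X, Y⁆) :
    Function.Bijective f ∨ IsNilpotent (f : L →ₗ[K] L) := by
  set g : L →ₗ[K] L := (f : L →ₗ[K] L) with hg
  have hgf : ∀ x : L, g x = f x := fun x => rfl
  have hpow : ∀ (n : ℕ) (X Y : L), (g ^ n) ⁅X, Y⁆ = ⁅(g ^ n) X, Y⁆ := by
    intro n
    induction n with
    | zero => intro X Y; simp
    | succ n ih =>
      intro X Y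
      have h1 : g ⁅X, Y⁆ = ⁅g X, Y⁆ := hf X Y
      rw [pow_succ, Module.End.mul_apply, Module.End.mul_apply, h1, ih]
  obtain ⟨n, hn, hn1⟩ :=
    ((g.eventually_isCompl_ker_pow_range_pow.and (Filter.eventually_ge_atTop 1))).exists
  -- ker (g ^ n) and range (g ^ n) are Lie ideals
  set I : LieIdeal K L :=
    { LinearMap.ker (g ^ n) with
      lie_mem := by
        intro x m hm
        simp only [Submodule.mem_carrier, SetLike.mem_coe, LinearMap.mem_ker] at hm ⊢
        rw [← lie_skew, map_neg, hpow, hm, zero_lie, neg_zero] } with hI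
  set J : LieIdeal K L :=
    { LinearMap.range (g ^ n) with
      lie_mem := by
        rintro x m hm
        obtain ⟨y, rfl⟩ := hm
        simp only [Submodule.mem_carrier, LinearMap.mem_range]
        exact ⟨-⁅y, x⁆, by rw [map_neg, hpow, ← lie_skew, neg_neg]⟩ } with hJ
  have hmemI : ∀ x : L, x ∈ I ↔ x ∈ LinearMap.ker (g ^ n) := fun x => Iff.rfl
  have hmemJ : ∀ x : L, x ∈ J ↔ x ∈ LinearMap.range (g ^ n) := fun x => Iff.rfl
  have hdis : I ⊓ J = ⊥ := by
    rw [eq_bot_iff]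
    intro x hx
    rw [LieSubmodule.mem_inf, hmemI, hmemJ, ← Submodule.mem_inf, hn.inf_eq_bot,
      Submodule.mem_bot] at hx
    simpa using hx
  have hcod : I ⊔ J = ⊤ := by
    rw [eq_top_iff]
    intro x _
    have hx : x ∈ LinearMap.ker (g ^ n) ⊔ LinearMap.range (g ^ n) := by
      rw [hn.sup_eq_top]; trivial
    obtain ⟨y, hy, z, hz, rfl⟩ := Submodule.mem_sup.mp hx
    exact add_mem ((le_sup_left : I ≤ I ⊔ J) ((hmemI y).mpr hy))
      ((le_sup_right : J ≤ I ⊔ J) ((hmemJ z).mpr hz))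
  rcases hL.2 I J hdis hcod with h | h
  · -- ker (g ^ n) = ⊥ hence range (g ^ n) = ⊤, so g is bijective
    left
    have hker : LinearMap.ker (g ^ n) = ⊥ := by
      rw [eq_bot_iff]
      intro x hx
      have : x ∈ I := (hmemI x).mpr hx
      rw [h, LieSubmodule.mem_bot] at this
      simpa using this
    have hJtop : J = ⊤ := by rw [h, bot_sup_eq] at hcod; exact hcod
    have hrange : LinearMap.range (g ^ n) = ⊤ := by
      rw [eq_top_iff]
      intro x _
      exact (hmemJ x).mp (by rw [hJtop]; trivial)
    have hinj : Function.Injective (g ^ n) := by rwa [← LinearMap.ker_eq_bot]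
    have hsurj : Function.Surjective (g ^ n) := by rwa [← LinearMap.range_eq_top]
    obtain ⟨m, rfl⟩ := Nat.exists_eq_add_of_le hn1
    have h1 : g ^ (1 + m) = g * g ^ m := by rw [pow_add, pow_one]
    have h2 : g ^ (1 + m) = g ^ m * g := by rw [add_comm, pow_add, pow_one]
    constructor
    · intro a b hab
      refine hinj ?_
      rw [h2, Module.End.mul_apply, Module.End.mul_apply]
      exact congrArg (g ^ m) hab
    · intro y
      obtain ⟨x, hx⟩ := hsurj y
      rw [h1, Module.End.mul_apply] at hx
      exact ⟨(g ^ m) x, hx⟩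
  · -- range (g ^ n) = ⊥ hence g ^ n = 0
    right
    refine ⟨n, ?_⟩
    rw [← LinearMap.range_eq_bot, eq_bot_iff]
    intro x hx
    have : x ∈ J := (hmemJ x).mpr hx
    rw [h, LieSubmodule.mem_bot] at this
    simpa using this
end

section
/- (Krull–Schmidt theorem for Lie algebras, non-abelian case.) Let L be a finite-dimensional Lie algebra over a field K with two direct sum decompositions L = g_1 ⊕ … ⊕ g_r = h_1 ⊕ … ⊕ h_s into Lie ideals, each directly indecomposable and each g_i non-abelian. Let π_i (resp. ρ_j) denote the projections along the two decompositions. Then r = s and there is a UNIQUE permutation σ of {1,…,r} such that whenever j = σ(i): both π_i|_{h_j} : h_j → g_i and ρ_j|_{g_i} : g_i → h_j are Lie algebra isomorphisms, [g_i, g_i] = [h_j, h_j], h_j ⊆ g_i ⊕ Z(⊕_{k ≠ i} g_k), and g_i ⊆ h_j ⊕ Z(⊕_{k ≠ j} h_k). -/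
/-- The linear map `p` restricts to a Lie algebra isomorphism from the ideal `A` onto the
ideal `B`. -/
def IsLieIsoOn {K L : Type*} [Field K] [LieRing L] [LieAlgebra K L]
    (p : L →ₗ[K] L) (A B : LieIdeal K L) : Prop :=
  (∀ x ∈ A, p x ∈ B) ∧
  (∀ x ∈ A, ∀ y ∈ A, p ⁅x, y⁆ = ⁅p x, p y⁆) ∧
  Set.InjOn p (A : Set L) ∧
  (∀ y ∈ B, ∃ x ∈ A, p x = y)

/-- The carrier of the center `Z(⊕_{k ≠ i} f k)` viewed inside `L`. -/
def centerOfComplSup {K L : Type*} [Field K] [LieRing L] [LieAlgebra K L]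
    {ι : Type*} (f : ι → LieIdeal K L) (i : ι) : Set L :=
  {z | z ∈ (⨆ k, ⨆ _ : k ≠ i, f k : LieIdeal K L) ∧
    ∀ y ∈ (⨆ k, ⨆ _ : k ≠ i, f k : LieIdeal K L), ⁅z, y⁆ = 0}

/-!
Fitting's lemma makes the centroid (the endomorphisms commuting with every `ad x`) of a
finite-dimensional directly indecomposable Lie algebra a local ring: each of its elements is
invertible or nilpotent. The projections of a decomposition lie in the centroid of `L`. For fixed
`i` the restrictions of `π i ∘ ρ j` to `g i` sum to the identity, so one of them is invertible;
then `ρ j ∘ π i` is not nilpotent on `h j`, hence invertible, and `π i : h j → g i` and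
`ρ j : g i → h j` are bijective. Injectivity of `ρ j` on `g i` forces `[g i, h k] = 0` for
`k ≠ j`, which gives the central decompositions and `[g i, g i] = [h j, h j]`. As
`[g i, g i] ≠ 0` and the `h j` are independent, this derived algebra determines `j`; so the
matching is a bijection and is unique.
-/

open Set Function

namespace LieAlgebra

variable (K M : Type*) [Field K] [LieRing M] [LieAlgebra K M]

def centroid : Subalgebra K (Module.End K M) :=
  Subalgebra.centralizer K (range (ad K M))

variable {K M}

theorem mem_centroid_iff {e : Module.End K M} :
    e ∈ centroid K M ↔ ∀ x y : M, e ⁅x, y⁆ = ⁅x, e y⁆ := by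
  simp only [centroid, Subalgebra.mem_centralizer_iff, forall_mem_range, LinearMap.ext_iff,
    Module.End.mul_apply, ad_apply, eq_comm]

theorem centroid.isUnit_of_bijective {e : centroid K M} (he : Bijective (e : Module.End K M)) :
    IsUnit e := by
  let u := ((Module.End.isUnit_iff _).2 he).unit
  have hinv : (↑u⁻¹ : Module.End K M) ∈ centroid K M :=
    Subalgebra.mem_centralizer_iff K |>.2 fun g hg =>
      (Commute.units_inv_right (u := u) ((Subalgebra.mem_centralizer_iff K).1 e.2 g hg)).eq
  exact ⟨⟨e, ⟨_, hinv⟩, Subtype.ext u.mul_inv, Subtype.ext u.inv_mul⟩, rfl⟩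

theorem restrict_mem_centroid {L : Type*} [LieRing L] [LieAlgebra K L] (I : LieIdeal K L)
    {e : Module.End K L} (he : e ∈ centroid K L) (hI : ∀ x ∈ I, e x ∈ I) :
    e.restrict hI ∈ centroid K I :=
  mem_centroid_iff.2 fun x y => Subtype.ext (mem_centroid_iff.1 he x y)

end LieAlgebra

open LieAlgebra

theorem LinearMap.isNilpotent_comp_swap {R V W : Type*} [Semiring R] [AddCommMonoid V]
    [Module R V] [AddCommMonoid W] [Module R W] {a : V →ₗ[R] W} {b : W →ₗ[R] V}
    (h : IsNilpotent (a ∘ₗ b)) : IsNilpotent (b ∘ₗ a) := by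
  obtain ⟨n, hn⟩ := h
  refine ⟨n + 1, LinearMap.ext fun x => ?_⟩
  have hsemi : Semiconj b (a ∘ₗ b) (b ∘ₗ a) := fun _ => rfl
  rw [Module.End.pow_apply, iterate_succ_apply, LinearMap.comp_apply,
    ← hsemi.iterate_right n (a x), ← Module.End.pow_apply, hn]
  simp

theorem LinearMap.bijOn_of_bijective_restrict {R V W : Type*} [Semiring R] [AddCommMonoid V]
    [Module R V] [AddCommMonoid W] [Module R W] {A : Submodule R V} {B : Submodule R W}
    {e : V →ₗ[R] W} (h : ∀ x ∈ A, e x ∈ B) (he : Bijective (e.restrict h)) : BijOn e A B :=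
  ⟨h, (MapsTo.restrict_inj h).1 he.1, (MapsTo.restrict_surjective_iff h).1 he.2⟩

namespace LieDirectlyIndecomposable

variable {K M : Type*} [Field K] [LieRing M] [LieAlgebra K M] [FiniteDimensional K M]

/-- Fitting's lemma: the kernel and the image of a high power of a centroid element are
complementary ideals. -/
theorem bijective_or_isNilpotent (hM : LieDirectlyIndecomposable K M) {e : Module.End K M}
    (he : e ∈ centroid K M) : Bijective e ∨ IsNilpotent e := by
  obtain ⟨n, hcompl, hn⟩ :=
    (e.eventually_isCompl_ker_pow_range_pow.and (Filter.eventually_ge_atTop 1)).exists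
  let φ : M →ₗ⁅K,M⁆ M := { e ^ n with map_lie' := mem_centroid_iff.1 (pow_mem he n) _ _ }
  have hφ : IsCompl φ.ker φ.range := by
    rwa [← LieSubmodule.isCompl_toSubmodule, LieModuleHom.ker_toSubmodule,
      LieModuleHom.toSubmodule_range]
  rcases hM.2 _ _ hφ.inf_eq_bot hφ.sup_eq_top with hker | hrange
  · have hinj : Injective (e ^ n) := (φ.ker_eq_bot).1 hker
    rw [← pow_sub_one_mul (by omega), Module.End.coe_mul] at hinj
    exact .inl ⟨hinj.of_comp, LinearMap.injective_iff_surjective.1 hinj.of_comp⟩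
  · refine .inr ⟨n, LinearMap.ext fun x => ?_⟩
    exact (LieSubmodule.mem_bot _).1 (hrange ▸ (φ.mem_range _).2 ⟨x, rfl⟩)

theorem isLocalRing_centroid (hM : LieDirectlyIndecomposable K M) :
    IsLocalRing (centroid K M) := by
  have := hM.1
  refine .of_isUnit_or_isUnit_one_sub_self fun e => ?_
  rcases hM.bijective_or_isNilpotent e.2 with he | ⟨n, hn⟩
  · exact .inl (centroid.isUnit_of_bijective he)
  · exact .inr (IsNilpotent.isUnit_one_sub ⟨n, Subtype.ext hn⟩)

end LieDirectlyIndecomposable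

structure IsIdealDecomposition {K L ι : Type*} [Field K] [LieRing L] [LieAlgebra K L]
    (f : ι → LieIdeal K L) (p : ι → L →ₗ[K] L) : Prop where
  iSup_eq_top : ⨆ i, f i = ⊤
  apply_mem : ∀ i x, p i x ∈ f i
  apply_of_mem : ∀ i, ∀ x ∈ f i, p i x = x
  apply_of_mem_ne : ∀ i k, k ≠ i → ∀ x ∈ f k, p i x = 0

namespace IsIdealDecomposition

variable {K L ι : Type*} [Field K] [LieRing L] [LieAlgebra K L]
  {f : ι → LieIdeal K L} {p : ι → L →ₗ[K] L}

theorem induction (hf : IsIdealDecomposition f p) {motive : L → Prop} (x : L)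
    (mem : ∀ k, ∀ y ∈ f k, motive y) (zero : motive 0)
    (add : ∀ y z, motive y → motive z → motive (y + z)) : motive x := by
  have hx : x ∈ ⨆ k, f k := hf.iSup_eq_top ▸ LieSubmodule.mem_top x
  exact LieSubmodule.iSup_induction _ (motive := motive) hx mem zero add

theorem apply_eq_zero_of_mem_iSup_ne (hf : IsIdealDecomposition f p) {i : ι} {x : L}
    (hx : x ∈ (⨆ k, ⨆ _ : k ≠ i, f k : LieIdeal K L)) : p i x = 0 := by
  rw [iSup_subtype'] at hx
  induction hx using LieSubmodule.iSup_induction' with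
  | mem k y hy => exact hf.apply_of_mem_ne i k k.2 y hy
  | zero => exact map_zero _
  | add y z _ _ hy hz => rw [map_add, hy, hz, add_zero]

theorem iSupIndep (hf : IsIdealDecomposition f p) : iSupIndep f := fun i => by
  rw [disjoint_iff, eq_bot_iff]
  rintro x ⟨hxi, hx⟩
  rw [LieSubmodule.mem_bot, ← hf.apply_of_mem i x hxi]
  exact hf.apply_eq_zero_of_mem_iSup_ne hx

theorem sub_apply_mem_iSup_ne (hf : IsIdealDecomposition f p) (i : ι) (x : L) :
    x - p i x ∈ (⨆ k, ⨆ _ : k ≠ i, f k : LieIdeal K L) := by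
  refine hf.induction (motive := fun x => x - p i x ∈ _) x (fun k y hy => ?_) (by simp)
    fun y z hy hz => by simpa [add_sub_add_comm] using add_mem hy hz
  by_cases hk : k = i
  · subst hk
    simp [hf.apply_of_mem k y hy]
  · rw [hf.apply_of_mem_ne i k hk y hy, sub_zero]
    exact LieSubmodule.mem_iSup_of_mem k (LieSubmodule.mem_iSup_of_mem hk hy)

theorem sum_apply [Fintype ι] (hf : IsIdealDecomposition f p) (x : L) : ∑ k, p k x = x := by
  refine hf.induction (motive := fun x => ∑ k, p k x = x) x (fun k y hy => ?_) (by simp)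
    fun y z hy hz => by simp only [map_add, Finset.sum_add_distrib, hy, hz]
  rw [Finset.sum_eq_single k (fun i _ hik => hf.apply_of_mem_ne i k hik.symm y hy) (by simp)]
  exact hf.apply_of_mem k y hy

theorem mem_centroid (hf : IsIdealDecomposition f p) (i : ι) : p i ∈ centroid K L := by
  refine mem_centroid_iff.2 fun x y => ?_
  have hsplit : ⁅x, y⁆ = ⁅x, p i y⁆ + ⁅x, y - p i y⁆ := by rw [← lie_add, add_sub_cancel]
  rw [hsplit, map_add, hf.apply_of_mem i _ ((f i).lie_mem (hf.apply_mem i y)),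
    hf.apply_eq_zero_of_mem_iSup_ne (LieSubmodule.lie_mem _ (hf.sub_apply_mem_iSup_ne i y)),
    add_zero]

theorem lie_eq_zero_of_mem_iSup_ne (hf : IsIdealDecomposition f p) {i : ι} {x y : L}
    (hx : x ∈ f i) (hy : y ∈ (⨆ k, ⨆ _ : k ≠ i, f k : LieIdeal K L)) : ⁅x, y⁆ = 0 := by
  rw [← hf.apply_of_mem i _ (lie_mem_left K L _ _ _ hx), mem_centroid_iff.1 (hf.mem_centroid i),
    hf.apply_eq_zero_of_mem_iSup_ne hy, lie_zero]

theorem map_lie (hf : IsIdealDecomposition f p) (i : ι) (x y : L) :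
    p i ⁅x, y⁆ = ⁅p i x, p i y⁆ := by
  have hrest : ⁅x - p i x, p i y⁆ = 0 := by
    rw [← lie_skew, hf.lie_eq_zero_of_mem_iSup_ne (hf.apply_mem i y)
      (hf.sub_apply_mem_iSup_ne i x), neg_zero]
  rw [mem_centroid_iff.1 (hf.mem_centroid i), ← add_sub_cancel (p i x) x, add_lie, hrest,
    add_zero, add_sub_cancel]

theorem isLieIsoOn (hf : IsIdealDecomposition f p) {i : ι} {A : LieIdeal K L}
    (hA : BijOn (p i) A (f i)) : IsLieIsoOn (p i) A (f i) :=
  ⟨fun _ hx => hA.mapsTo hx, fun x _ y _ => hf.map_lie i x y, hA.injOn, fun _ hy => hA.surjOn hy⟩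

theorem exists_add_mem_centerOfComplSup (hf : IsIdealDecomposition f p) {i : ι}
    {A : LieIdeal K L} (hA : InjOn (p i) A) {x : L} (hx : x ∈ A) :
    ∃ a ∈ f i, ∃ z ∈ centerOfComplSup f i, x = a + z := by
  have hcomm : ∀ y ∈ (⨆ k, ⨆ _ : k ≠ i, f k : LieIdeal K L), ⁅x, y⁆ = 0 := fun y hy =>
    hA (lie_mem_left K L _ _ _ hx) (zero_mem A) <| by
      rw [mem_centroid_iff.1 (hf.mem_centroid i), hf.apply_eq_zero_of_mem_iSup_ne hy, lie_zero,
        map_zero]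
  refine ⟨p i x, hf.apply_mem i x, x - p i x, ⟨hf.sub_apply_mem_iSup_ne i x, fun y hy => ?_⟩,
    (add_sub_cancel _ _).symm⟩
  rw [sub_lie, hcomm y hy, hf.lie_eq_zero_of_mem_iSup_ne (hf.apply_mem i x) hy, sub_zero]

theorem lie_self_le_of_exists_add_mem_centerOfComplSup (hf : IsIdealDecomposition f p) {i : ι} {A : LieIdeal K L}
    (hA : ∀ x ∈ A, ∃ a ∈ f i, ∃ z ∈ centerOfComplSup f i, x = a + z) :
    ⁅A, A⁆ ≤ ⁅f i, f i⁆ := by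
  refine (LieSubmodule.lie_le_iff _ _ _).2 fun x hx y hy => ?_
  obtain ⟨a, ha, z, ⟨hz, hzc⟩, rfl⟩ := hA x hx
  obtain ⟨b, hb, w, ⟨hw, -⟩, rfl⟩ := hA y hy
  have hbz : ⁅z, b⁆ = 0 := by rw [← lie_skew, hf.lie_eq_zero_of_mem_iSup_ne hb hz, neg_zero]
  rw [add_lie, lie_add, lie_add, hf.lie_eq_zero_of_mem_iSup_ne ha hw, hbz, hzc w hw, add_zero,
    add_zero, add_zero]
  exact LieSubmodule.lie_mem_lie ha hb

theorem eq_of_lie_self_eq (hf : IsIdealDecomposition f p) {j j' : ι}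
    (h : ⁅f j, f j⁆ = ⁅f j', f j'⁆) (hne : ⁅f j, f j⁆ ≠ ⊥) : j = j' := by
  by_contra hjj
  refine hne (eq_bot_iff.2 ?_)
  calc ⁅f j, f j⁆ ≤ f j ⊓ f j' :=
        le_inf (LieSubmodule.lie_le_right _ _) (h ▸ LieSubmodule.lie_le_right _ _)
    _ = ⊥ := (hf.iSupIndep.pairwiseDisjoint hjj).eq_bot

end IsIdealDecomposition

theorem IsIdealDecomposition.exists_bijOn_bijOn {K L ι κ : Type*} [Field K] [LieRing L]
    [LieAlgebra K L] [FiniteDimensional K L] [Fintype κ]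
    {f : ι → LieIdeal K L} {p : ι → L →ₗ[K] L} {f' : κ → LieIdeal K L} {p' : κ → L →ₗ[K] L}
    (hf : IsIdealDecomposition f p) (hf' : IsIdealDecomposition f' p') {i : ι}
    (hi : LieDirectlyIndecomposable K (f i)) (hf'ind : ∀ j, LieDirectlyIndecomposable K (f' j)) :
    ∃ j, BijOn (p' j) (f i) (f' j) ∧ BijOn (p i) (f' j) (f i) := by
  let a j : f i →ₗ[K] f' j := (p' j).restrict fun x _ => hf'.apply_mem j x
  let b j : f' j →ₗ[K] f i := (p i).restrict fun x _ => hf.apply_mem i x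
  have hba j : b j ∘ₗ a j ∈ centroid K (f i) :=
    restrict_mem_centroid _ (mul_mem (hf.mem_centroid i) (hf'.mem_centroid j))
      fun _ _ => hf.apply_mem i _
  have hab j : a j ∘ₗ b j ∈ centroid K (f' j) :=
    restrict_mem_centroid _ (mul_mem (hf'.mem_centroid j) (hf.mem_centroid i))
      fun _ _ => hf'.apply_mem j _
  have hsum : ∑ j, (⟨b j ∘ₗ a j, hba j⟩ : centroid K (f i)) = 1 := by
    ext x
    simp only [AddSubmonoidClass.coe_finsetSum, LinearMap.coe_sum, LinearMap.coe_comp,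
      Finset.sum_apply, comp_apply, OneMemClass.coe_one, Module.End.one_apply]
    change ∑ j, p i (p' j x) = x
    rw [← map_sum, hf'.sum_apply, hf.apply_of_mem i x x.2]
  have := hi.isLocalRing_centroid
  obtain ⟨j, -, hj⟩ := IsLocalRing.exists_of_isUnit_sum (hsum ▸ isUnit_one)
  have hE : IsUnit (b j ∘ₗ a j) := hj.map (centroid K (f i)).val
  have hF : Bijective (a j ∘ₗ b j) := by
    refine ((hf'ind j).bijective_or_isNilpotent (hab j)).resolve_right fun hn => ?_
    have := hi.1
    exact hE.not_isNilpotent (LinearMap.isNilpotent_comp_swap hn)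
  rw [Module.End.isUnit_iff, LinearMap.coe_comp] at hE
  rw [LinearMap.coe_comp] at hF
  exact ⟨j, LinearMap.bijOn_of_bijective_restrict _ ⟨hE.1.of_comp, hF.2.of_comp⟩,
    LinearMap.bijOn_of_bijective_restrict _ ⟨hF.1.of_comp, hE.2.of_comp⟩⟩

def IsKrullSchmidtPair {K L ι κ : Type*} [Field K] [LieRing L] [LieAlgebra K L]
    (f : ι → LieIdeal K L) (p : ι → L →ₗ[K] L) (f' : κ → LieIdeal K L) (p' : κ → L →ₗ[K] L)
    (i : ι) (j : κ) : Prop :=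
  IsLieIsoOn (p i) (f' j) (f i) ∧
  IsLieIsoOn (p' j) (f i) (f' j) ∧
  ⁅f i, f i⁆ = ⁅f' j, f' j⁆ ∧
  (∀ x ∈ f' j, ∃ a ∈ f i, ∃ z ∈ centerOfComplSup f i, x = a + z) ∧
  (∀ x ∈ f i, ∃ a ∈ f' j, ∃ z ∈ centerOfComplSup f' j, x = a + z)

theorem IsKrullSchmidtPair.lie_self_eq {K L ι κ : Type*} [Field K] [LieRing L] [LieAlgebra K L]
    {f : ι → LieIdeal K L} {p : ι → L →ₗ[K] L} {f' : κ → LieIdeal K L} {p' : κ → L →ₗ[K] L}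
    {i : ι} {j : κ} (h : IsKrullSchmidtPair f p f' p' i j) : ⁅f i, f i⁆ = ⁅f' j, f' j⁆ :=
  h.2.2.1

theorem IsIdealDecomposition.isKrullSchmidtPair {K L ι κ : Type*} [Field K] [LieRing L]
    [LieAlgebra K L] {f : ι → LieIdeal K L} {p : ι → L →ₗ[K] L} {f' : κ → LieIdeal K L}
    {p' : κ → L →ₗ[K] L} (hf : IsIdealDecomposition f p) (hf' : IsIdealDecomposition f' p')
    {i : ι} {j : κ} (hp' : BijOn (p' j) (f i) (f' j)) (hp : BijOn (p i) (f' j) (f i)) :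
    IsKrullSchmidtPair f p f' p' i j :=
  have hf'i x (hx : x ∈ f i) := hf'.exists_add_mem_centerOfComplSup hp'.injOn hx
  have hfj x (hx : x ∈ f' j) := hf.exists_add_mem_centerOfComplSup hp.injOn hx
  ⟨hf.isLieIsoOn hp, hf'.isLieIsoOn hp', le_antisymm (hf'.lie_self_le_of_exists_add_mem_centerOfComplSup hf'i)
    (hf.lie_self_le_of_exists_add_mem_centerOfComplSup hfj), hfj, hf'i⟩

theorem stmt6_general {K L : Type*} [Field K] [LieRing L] [LieAlgebra K L]
    [FiniteDimensional K L] {r s : ℕ}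
    (g : Fin r → LieIdeal K L) (h : Fin s → LieIdeal K L)
    (hgsup : (⨆ i, g i) = ⊤)
    (hhsup : (⨆ j, h j) = ⊤)
    (hgind : ∀ i, LieDirectlyIndecomposable K (g i))
    (hhind : ∀ j, LieDirectlyIndecomposable K (h j))
    (hgnonab : ∀ i, ¬ IsLieAbelian (g i))
    (π : Fin r → (L →ₗ[K] L)) (ρ : Fin s → (L →ₗ[K] L))
    (hπmem : ∀ i x, π i x ∈ g i)
    (hπid : ∀ i, ∀ x ∈ g i, π i x = x)
    (hπzero : ∀ i k, k ≠ i → ∀ x ∈ g k, π i x = 0)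
    (hρmem : ∀ j x, ρ j x ∈ h j)
    (hρid : ∀ j, ∀ x ∈ h j, ρ j x = x)
    (hρzero : ∀ j k, k ≠ j → ∀ x ∈ h k, ρ j x = 0) :
    r = s ∧ ∃! σ : Fin r ≃ Fin s, ∀ i : Fin r,
      IsLieIsoOn (π i) (h (σ i)) (g i) ∧
      IsLieIsoOn (ρ (σ i)) (g i) (h (σ i)) ∧
      ⁅g i, g i⁆ = ⁅h (σ i), h (σ i)⁆ ∧
      (∀ x ∈ h (σ i), ∃ a ∈ g i, ∃ z ∈ centerOfComplSup g i, x = a + z) ∧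
      (∀ x ∈ g i, ∃ a ∈ h (σ i), ∃ z ∈ centerOfComplSup h (σ i), x = a + z) := by
  have hg : IsIdealDecomposition g π := ⟨hgsup, hπmem, hπid, hπzero⟩
  have hh : IsIdealDecomposition h ρ := ⟨hhsup, hρmem, hρid, hρzero⟩
  have hne i : ⁅g i, g i⁆ ≠ ⊥ := mt (LieSubmodule.lie_abelian_iff_lie_self_eq_bot _).2 (hgnonab i)
  choose σ hσ using fun i => hg.exists_bijOn_bijOn hh (hgind i) hhind
  have hpair i : IsKrullSchmidtPair g π h ρ i (σ i) := hg.isKrullSchmidtPair hh (hσ i).1 (hσ i).2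
  have hinj : Injective σ := fun i i' hii' => hg.eq_of_lie_self_eq
    (by rw [(hpair i).lie_self_eq, hii', (hpair i').lie_self_eq]) (hne i)
  have hsurj : Surjective σ := fun j => by
    obtain ⟨i, hπi, hρj⟩ := hh.exists_bijOn_bijOn hg (hhind j) hgind
    refine ⟨i, hh.eq_of_lie_self_eq ?_ ((hpair i).lie_self_eq ▸ hne i)⟩
    rw [← (hpair i).lie_self_eq, (hg.isKrullSchmidtPair hh hρj hπi).lie_self_eq]
  let e := Equiv.ofBijective σ ⟨hinj, hsurj⟩
  refine ⟨Fin.equiv_iff_eq.1 ⟨e⟩, ?_⟩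
  show ∃! σ : Fin r ≃ Fin s, ∀ i, IsKrullSchmidtPair g π h ρ i (σ i)
  refine ⟨e, hpair, fun τ hτ => Equiv.ext fun i => ?_⟩
  exact hh.eq_of_lie_self_eq ((hτ i).lie_self_eq.symm.trans (hpair i).lie_self_eq)
    ((hτ i).lie_self_eq ▸ hne i)

/-- **Krull–Schmidt theorem for Lie algebras, non-abelian case.** Given two
direct sum decompositions `L = g₁ ⊕ ⋯ ⊕ g_r = h₁ ⊕ ⋯ ⊕ h_s` into directly indecomposable
non-abelian Lie ideals, with projections `π i` and `ρ j`, one has `r = s` and there is a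
unique permutation `σ` such that for `j = σ i`: both `π i : h j → g i` and `ρ j : g i → h j`
restrict to Lie algebra isomorphisms, `[g i, g i] = [h j, h j]`,
`h j ⊆ g i ⊕ Z(⊕_{k ≠ i} g k)` and `g i ⊆ h j ⊕ Z(⊕_{k ≠ j} h k)`. -/
theorem stmt6 {K L : Type*} [Field K] [LieRing L] [LieAlgebra K L]
    [FiniteDimensional K L] {r s : ℕ}
    (g : Fin r → LieIdeal K L) (h : Fin s → LieIdeal K L)
    (hgsup : (⨆ i, g i) = ⊤)
    (hgdisj : ∀ i, g i ⊓ (⨆ k, ⨆ _ : k ≠ i, g k) = ⊥)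
    (hhsup : (⨆ j, h j) = ⊤)
    (hhdisj : ∀ j, h j ⊓ (⨆ k, ⨆ _ : k ≠ j, h k) = ⊥)
    (hgind : ∀ i, LieDirectlyIndecomposable K (g i))
    (hhind : ∀ j, LieDirectlyIndecomposable K (h j))
    (hgnonab : ∀ i, ¬ IsLieAbelian (g i))
    (π : Fin r → (L →ₗ[K] L)) (ρ : Fin s → (L →ₗ[K] L))
    (hπmem : ∀ i x, π i x ∈ g i)
    (hπid : ∀ i, ∀ x ∈ g i, π i x = x)
    (hπzero : ∀ i k, k ≠ i → ∀ x ∈ g k, π i x = 0)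
    (hρmem : ∀ j x, ρ j x ∈ h j)
    (hρid : ∀ j, ∀ x ∈ h j, ρ j x = x)
    (hρzero : ∀ j k, k ≠ j → ∀ x ∈ h k, ρ j x = 0) :
    r = s ∧ ∃! σ : Fin r ≃ Fin s, ∀ i : Fin r,
      IsLieIsoOn (π i) (h (σ i)) (g i) ∧
      IsLieIsoOn (ρ (σ i)) (g i) (h (σ i)) ∧
      ⁅g i, g i⁆ = ⁅h (σ i), h (σ i)⁆ ∧
      (∀ x ∈ h (σ i), ∃ a ∈ g i, ∃ z ∈ centerOfComplSup g i, x = a + z) ∧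
      (∀ x ∈ g i, ∃ a ∈ h (σ i), ∃ z ∈ centerOfComplSup h (σ i), x = a + z) :=
  stmt6_general g h hgsup hhsup hgind hhind hgnonab π ρ hπmem hπid hπzero hρmem hρid hρzero
end

section
/- Let F be a field and let A be the 3×3 matrix over F with rows (1,1,1), (1,1,0), (1,0,1). Then A is invertible, its inverse has rows (−1,1,1), (1,0,−1), (1,−1,0), and there is NO permutation σ of {1,2,3} such that for all i one has A_{i,σ(i)} ≠ 0 and (A^{-1})_{σ(i),i} ≠ 0. (This refutes the simultaneous-isomorphism claim of Theorem 3.3 of Fisher–Gray–Hydon for decompositions with abelian summands.) -/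
/-- **counterexample to the simultaneous-isomorphism claim of
Fisher–Gray–Hydon.** For the matrix `A` over an arbitrary field `F` with rows
`(1,1,1), (1,1,0), (1,0,1)`: `A` is invertible, its inverse has rows
`(−1,1,1), (1,0,−1), (1,−1,0)`, and there is no permutation `σ` of `{1,2,3}` with
`A i (σ i) ≠ 0` and `A⁻¹ (σ i) i ≠ 0` for all `i`. -/
theorem stmt7 (F : Type*) [Field F]
    (A : Matrix (Fin 3) (Fin 3) F)
    (hA : A = !![1, 1, 1; 1, 1, 0; 1, 0, 1]) :
    IsUnit A ∧
    A⁻¹ = !![-1, 1, 1; 1, 0, -1; 1, -1, 0] ∧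
    ¬ ∃ σ : Equiv.Perm (Fin 3), ∀ i : Fin 3, A i (σ i) ≠ 0 ∧ A⁻¹ (σ i) i ≠ 0 := by
  subst hA
  have hmul : (!![1, 1, 1; 1, 1, 0; 1, 0, 1] : Matrix (Fin 3) (Fin 3) F) *
      !![-1, 1, 1; 1, 0, -1; 1, -1, 0] = 1 := by
    rw [Matrix.one_fin_three]; norm_num [Matrix.mul_fin_three]
  have hinv : (!![1, 1, 1; 1, 1, 0; 1, 0, 1] : Matrix (Fin 3) (Fin 3) F)⁻¹ =
      !![-1, 1, 1; 1, 0, -1; 1, -1, 0] := Matrix.inv_eq_right_inv hmul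
  refine ⟨Matrix.isUnit_iff_isUnit_det _ |>.mpr ?_, hinv, ?_⟩
  · simp [Matrix.det_fin_three, Matrix.vecHead, Matrix.vecTail]
  · rintro ⟨σ, h⟩
    rw [hinv] at h
    have h1 : σ 1 = 0 := by
      have := h 1
      have h3 : σ 1 = 0 ∨ σ 1 = 1 ∨ σ 1 = 2 := by omega
      rcases h3 with h3 | h3 | h3 <;> simp [h3] at this ⊢
    have h2 : σ 2 = 0 := by
      have := h 2
      have h3 : σ 2 = 0 ∨ σ 2 = 1 ∨ σ 2 = 2 := by omega
      rcases h3 with h3 | h3 | h3 <;> simp [h3] at this ⊢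
    exact absurd (σ.injective (h1.trans h2.symm)) (by decide)
end

section
/- Let L = L_1 ⊕ L_2 ⊕ … ⊕ L_r be a direct sum of finite-dimensional, non-abelian, directly indecomposable Lie algebras over a field K, and let π_i denote the projection onto L_i. (1) Every Lie algebra automorphism Φ of L decomposes UNIQUELY as Φ = Θ + Ψ where: Θ is a Lie algebra automorphism of L mapping each summand L_i onto an isomorphic summand L_{σ(i)} for some permutation σ of {1,…,r}; Ψ is a Lie algebra endomorphism with Ψ(L) ⊆ Z(L); and π_{σ(i)}(Ψ(L_i)) = 0 for every i. (2) Conversely, for any pair Θ, Ψ of Lie algebra endomorphisms of L satisfying these three conditions, the pointwise sum Θ + Ψ is a Lie algebra automorphism of L. -/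
/-!
Write `Φ_{kj}` for `π k ∘ Φ` restricted to the summand `g j`. For a fixed `i`, the
endomorphisms `Φ⁻¹_{ij} ∘ Φ_{ji}` of `g i` are Lie algebra maps with pairwise commuting images
adding up to the identity, so they commute with `ad (g i)`. By Fitting's lemma such
endomorphisms of an indecomposable `g i` form a local ring, so one of them is invertible, and
only one since `g i` is not abelian; call its index `σ i`. Comparing with `Φ⁻¹` shows that `σ` is
a permutation and that each block `Φ_{σ i, i}` is onto, which makes every other block central.
Hence `Θ = ∑ i, Φ_{σ i, i} ∘ π i` is a Lie algebra map and `Ψ = Φ - Θ` is central.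

The centre of `L` lies in `[L, L]`: a central element of an indecomposable summand outside its
derived algebra would split off a one-dimensional ideal. A central homomorphism vanishes on
`[L, L]`, so adding one to an automorphism keeps it injective. Uniqueness holds because `Θ` is
`π (σ i) ∘ Φ` on `g i`, and a different `σ` would make some summand central.
-/

open LieAlgebra

lemma LinearMap.isNilpotent_comp_swap_s9 {R M N : Type*} [CommSemiring R] [AddCommMonoid M]
    [Module R M] [AddCommMonoid N] [Module R N] {α : M →ₗ[R] N} {β : N →ₗ[R] M}
    (h : IsNilpotent (α ∘ₗ β)) : IsNilpotent (β ∘ₗ α) := by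
  obtain ⟨n, hn⟩ := h
  have key : ∀ n : ℕ, (β ∘ₗ α) ^ (n + 1) = β ∘ₗ ((α ∘ₗ β) ^ n) ∘ₗ α := by
    intro n
    induction n with
    | zero => rfl
    | succ n ih => rw [pow_succ, ih, pow_succ]; rfl
  exact ⟨n + 1, by rw [key, hn, LinearMap.zero_comp, LinearMap.comp_zero]⟩

section LieModuleEnd

variable (R L M : Type*) [CommRing R] [LieRing L] [LieAlgebra R L] [AddCommGroup M] [Module R M]
  [LieRingModule L M] [LieModule R L M]

def lieModuleEnd : Subalgebra R (Module.End R M) :=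
  Subalgebra.centralizer R (Set.range (LieModule.toEnd R L M))

variable {R L M}

lemma mem_lieModuleEnd_iff {f : Module.End R M} :
    f ∈ lieModuleEnd R L M ↔ ∀ (x : L) (m : M), f ⁅x, m⁆ = ⁅x, f m⁆ := by
  simp only [lieModuleEnd, Subalgebra.mem_centralizer_iff, Set.forall_mem_range,
    LinearMap.ext_iff, Module.End.mul_apply, LieModule.toEnd_apply_apply]
  exact forall_congr' fun x => forall_congr' fun m => eq_comm

lemma isUnit_of_bijective_of_mem_lieModuleEnd {f : Module.End R M} (hf : f ∈ lieModuleEnd R L M)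
    (hbij : Function.Bijective f) : IsUnit (⟨f, hf⟩ : lieModuleEnd R L M) := by
  obtain ⟨u, rfl⟩ := (Module.End.isUnit_iff f).mpr hbij
  have hinv : (↑u⁻¹ : Module.End R M) ∈ lieModuleEnd R L M :=
    (Subalgebra.mem_centralizer_iff R).mpr fun g hg =>
      (Commute.units_inv_right ((Subalgebra.mem_centralizer_iff R).mp hf g hg)).eq
  exact ⟨⟨_, ⟨_, hinv⟩, Subtype.ext u.mul_inv, Subtype.ext u.inv_mul⟩, rfl⟩

variable [IsArtinian R M] [IsNoetherian R M]
  (hM : ∀ N₁ N₂ : LieSubmodule R L M, IsCompl N₁ N₂ → N₁ = ⊥ ∨ N₂ = ⊥)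
include hM

-- Fitting's lemma
lemma isNilpotent_or_bijective_of_mem_lieModuleEnd {f : Module.End R M}
    (hf : f ∈ lieModuleEnd R L M) : IsNilpotent f ∨ Function.Bijective f := by
  obtain ⟨n, hn, hcompl⟩ :=
    ((Filter.eventually_ge_atTop 1).and f.eventually_isCompl_ker_pow_range_pow).exists
  let F : M →ₗ⁅R, L⁆ M := { f ^ n with map_lie' := mem_lieModuleEnd_iff.mp (pow_mem hf n) _ _ }
  rcases hM F.ker F.range (LieSubmodule.isCompl_toSubmodule.mp hcompl) with h | h
  · obtain ⟨m, rfl⟩ := Nat.exists_eq_add_of_le' hn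
    have hinj : Function.Injective ⇑(f ^ (m + 1)) := (LieModuleHom.ker_eq_bot F).mp h
    rw [pow_succ, Module.End.coe_mul] at hinj
    exact Or.inr (IsArtinian.bijective_of_injective_endomorphism f hinj.of_comp)
  · exact Or.inl ⟨n, LinearMap.range_eq_bot.mp (congrArg LieSubmodule.toSubmodule h)⟩

lemma isLocalRing_lieModuleEnd [Nontrivial M] : IsLocalRing (lieModuleEnd R L M) := by
  refine IsLocalRing.of_isUnit_or_isUnit_one_sub_self fun f => ?_
  rcases isNilpotent_or_bijective_of_mem_lieModuleEnd hM f.2 with hnil | hbij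
  · exact Or.inr (IsNilpotent.isUnit_one_sub
      ((IsNilpotent.map_iff (f := (lieModuleEnd R L M).val) Subtype.val_injective).mp hnil))
  · exact Or.inl (isUnit_of_bijective_of_mem_lieModuleEnd f.2 hbij)

end LieModuleEnd

section LieAlgebra

variable {K M : Type*} [Field K] [LieRing M] [LieAlgebra K M]

lemma LieAlgebra.lie_eq_zero_of_mem_center_right {z : M} (hz : z ∈ center K M) (x : M) :
    ⁅x, z⁆ = 0 :=
  (LieModule.mem_maxTrivSubmodule K M M z).mp hz x

lemma LieAlgebra.lie_eq_zero_of_mem_center_left {z : M} (hz : z ∈ center K M) (x : M) :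
    ⁅z, x⁆ = 0 := by
  rw [← lie_skew, lie_eq_zero_of_mem_center_right hz, neg_zero]

lemma LieAlgebra.lie_mem_derivedSeries_one (x y : M) : ⁅x, y⁆ ∈ derivedSeries K M 1 := by
  rw [derivedSeries_def, derivedSeriesOfIdeal_succ, derivedSeriesOfIdeal_zero]
  exact LieSubmodule.lie_mem_lie (LieSubmodule.mem_top x) (LieSubmodule.mem_top y)

lemma LieHom.map_mem_derivedSeries {M' : Type*} [LieRing M'] [LieAlgebra K M']
    (f : M →ₗ⁅K⁆ M') {x : M} {k : ℕ} (hx : x ∈ derivedSeries K M k) :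
    f x ∈ derivedSeries K M' k :=
  LieIdeal.derivedSeries_map_le (f := f) k (LieIdeal.mem_map hx)

lemma LieHom.sub_map_lie_eq_zero {Φ Θ : M →ₗ⁅K⁆ M} (h : ∀ x, Φ x - Θ x ∈ center K M) (x y : M) :
    Φ ⁅x, y⁆ - Θ ⁅x, y⁆ = 0 := by
  have hΦ (z : M) : Φ z = Θ z + (Φ z - Θ z) := by abel
  rw [Φ.map_lie, Θ.map_lie, hΦ x, hΦ y, add_lie, lie_add, lie_add,
    lie_eq_zero_of_mem_center_right (h y), lie_eq_zero_of_mem_center_right (h y),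
    lie_eq_zero_of_mem_center_left (h x)]
  abel

/-- A central element outside `[M, M]` would split off `M` as a one-dimensional ideal. -/
lemma LieDirectlyIndecomposable.center_le_derivedSeries_one
    (hind : LieDirectlyIndecomposable K M) (hnonab : ¬ IsLieAbelian M) :
    center K M ≤ derivedSeries K M 1 := by
  intro z hz
  by_contra hzD
  have hdisj : Disjoint (derivedSeries K M 1).toSubmodule (K ∙ z) :=
    Submodule.disjoint_span_singleton.mpr fun h => absurd h hzD
  obtain ⟨W, hDW, hW⟩ := hdisj.exists_isCompl
  let I : LieIdeal K M :=
    { W with lie_mem := fun _ => hDW (lie_mem_derivedSeries_one _ _) }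
  have hzc : (K ∙ z) ≤ center K M := (Submodule.span_singleton_le_iff_mem _ _).mpr hz
  let J : LieIdeal K M :=
    { K ∙ z with
      lie_mem := fun {x m} hm => by
        rw [lie_eq_zero_of_mem_center_right (hzc hm)]; exact Submodule.zero_mem _ }
  have hIJ : IsCompl I J := LieSubmodule.isCompl_toSubmodule.mp hW
  rcases hind.2 I J hIJ.inf_eq_bot hIJ.sup_eq_top with h | h
  · refine hnonab ⟨fun x y => ?_⟩
    have : ⁅x, y⁆ ∈ I := hDW (lie_mem_derivedSeries_one x y)
    rwa [h, LieSubmodule.mem_bot] at this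
  · have : z ∈ J := Submodule.mem_span_singleton_self z
    rw [h, LieSubmodule.mem_bot] at this
    exact hzD (this ▸ zero_mem _)

end LieAlgebra

section Decomposition

variable {K M ι : Type*} [Field K] [LieRing M] [LieAlgebra K M] [Fintype ι]
  {c : ι → Module.End K M}

lemma mem_lieModuleEnd_of_sum_eq_one (hsum : ∑ j, c j = 1)
    (hlie : ∀ j x y, c j ⁅x, y⁆ = ⁅c j x, c j y⁆)
    (horth : ∀ j k, j ≠ k → ∀ x y, ⁅c j x, c k y⁆ = 0) (j : ι) :
    c j ∈ lieModuleEnd K M M := by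
  refine mem_lieModuleEnd_iff.mpr fun x y => ?_
  calc c j ⁅x, y⁆ = ∑ k, ⁅c k x, c j y⁆ := by
        rw [hlie, Finset.sum_eq_single j (fun k _ hk => horth k j hk x y) (by simp)]
    _ = ⁅x, c j y⁆ := by rw [← sum_lie, ← LinearMap.sum_apply, hsum, Module.End.one_apply]

lemma existsUnique_bijective_of_sum_eq_one [FiniteDimensional K M]
    (hind : LieDirectlyIndecomposable K M) (hnonab : ¬ IsLieAbelian M) (hsum : ∑ j, c j = 1)
    (hlie : ∀ j x y, c j ⁅x, y⁆ = ⁅c j x, c j y⁆)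
    (horth : ∀ j k, j ≠ k → ∀ x y, ⁅c j x, c k y⁆ = 0) :
    ∃! j, Function.Bijective (c j) := by
  have hmem := mem_lieModuleEnd_of_sum_eq_one hsum hlie horth
  have := hind.1
  have := isLocalRing_lieModuleEnd (L := M) fun I J h => hind.2 I J h.inf_eq_bot h.sup_eq_top
  obtain ⟨j, -, hj⟩ := IsLocalRing.exists_of_isUnit_sum (s := Finset.univ)
    (f := fun j => (⟨c j, hmem j⟩ : lieModuleEnd K M M)) <| by
      convert isUnit_one
      exact Subtype.ext (by simpa using hsum)
  have hbij : Function.Bijective (c j) :=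
    (Module.End.isUnit_iff _).mp (hj.map (lieModuleEnd K M M).val)
  refine ⟨j, hbij, fun k hk => ?_⟩
  by_contra hkj
  refine hnonab ⟨fun x y => ?_⟩
  obtain ⟨a, rfl⟩ := hk.2 x
  obtain ⟨b, rfl⟩ := hbij.2 y
  exact horth k j hkj a b

end Decomposition

section CentralPerturbation

variable {K L : Type*} [Field K] [LieRing L] [LieAlgebra K L]

variable {Ψ : L →ₗ[K] L} (hΨ : ∀ x, Ψ x ∈ center K L) (hΨlie : ∀ x y : L, Ψ ⁅x, y⁆ = 0)
include hΨ hΨlie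

lemma LieHom.map_lie_add_of_mem_center (Θ : L →ₗ⁅K⁆ L) (x y : L) :
    Θ ⁅x, y⁆ + Ψ ⁅x, y⁆ = ⁅Θ x + Ψ x, Θ y + Ψ y⁆ := by
  rw [hΨlie, add_zero, lie_add, add_lie, add_lie, lie_eq_zero_of_mem_center_right (hΨ y),
    lie_eq_zero_of_mem_center_right (hΨ y), lie_eq_zero_of_mem_center_left (hΨ x), Θ.map_lie,
    add_zero, add_zero, add_zero]

/-- If `Θ x = -Ψ x`, then `Θ x ∈ Z(L) ⊆ [L, L]`, so `x ∈ [L, L]`, where `Ψ` vanishes. -/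
lemma LieHom.injective_add_of_center_le (hZ : center K L ≤ derivedSeries K L 1)
    {Θ : L →ₗ⁅K⁆ L} (hΘ : Function.Bijective Θ) :
    Function.Injective ((Θ : L →ₗ[K] L) + Ψ) := by
  have hΨD : (derivedSeries K L 1 : Submodule K L) ≤ LinearMap.ker Ψ := by
    rw [coe_derivedSeries_one_eq, Submodule.span_le]
    rintro _ ⟨x, y, rfl⟩
    exact hΨlie x y
  refine (injective_iff_map_eq_zero _).mpr fun x hx => ?_
  have hΘx : Θ x = -Ψ x := eq_neg_of_add_eq_zero_left hx
  have hxD : x ∈ derivedSeries K L 1 := by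
    have hΘxD : Θ x ∈ derivedSeries K L 1 := hZ (hΘx ▸ neg_mem (hΨ x))
    let e := LieEquiv.ofBijective Θ hΘ
    simpa only [LieEquiv.coe_coe, e.symm_apply_apply] using
      e.symm.toLieHom.map_mem_derivedSeries (x := e x) hΘxD
  rw [hΨD hxD, neg_zero, ← Θ.map_zero] at hΘx
  exact hΘ.1 hΘx

lemma LieHom.bijective_add_of_center_le [FiniteDimensional K L]
    (hZ : center K L ≤ derivedSeries K L 1) {Θ : L →ₗ⁅K⁆ L} (hΘ : Function.Bijective Θ) :
    Function.Bijective ((Θ : L →ₗ[K] L) + Ψ) :=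
  have hinj := Θ.injective_add_of_center_le hΨ hΨlie hZ hΘ
  ⟨hinj, LinearMap.injective_iff_surjective.mp hinj⟩

end CentralPerturbation

lemma LieHom.exists_lieEquiv_add_of_center_le {K L : Type*} [Field K] [LieRing L]
    [LieAlgebra K L] [FiniteDimensional K L] (hZ : center K L ≤ derivedSeries K L 1)
    {Θ Ψ : L →ₗ⁅K⁆ L} (hΘ : Function.Bijective Θ) (hΨ : ∀ x, Ψ x ∈ center K L) :
    ∃ e : L ≃ₗ⁅K⁆ L, ∀ x, e x = Θ x + Ψ x := by
  have hΨlie (x y : L) : Ψ ⁅x, y⁆ = 0 := by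
    rw [Ψ.map_lie, lie_eq_zero_of_mem_center_right (hΨ y)]
  let S : L →ₗ⁅K⁆ L :=
    { (Θ : L →ₗ[K] L) + Ψ with map_lie' := Θ.map_lie_add_of_mem_center hΨ hΨlie _ _ }
  exact ⟨LieEquiv.ofBijective S (Θ.bijective_add_of_center_le hΨ hΨlie hZ hΘ), fun _ => rfl⟩

structure IsDirectSumProjections {K L ι : Type*} [Field K] [LieRing L] [LieAlgebra K L]
    (g : ι → LieIdeal K L) (π : ι → L →ₗ[K] L) : Prop where
  iSup_eq_top : ⨆ i, g i = ⊤
  proj_mem : ∀ i x, π i x ∈ g i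
  proj_eq_self : ∀ i, ∀ x ∈ g i, π i x = x
  proj_eq_zero : ∀ i k, k ≠ i → ∀ x ∈ g k, π i x = 0

namespace IsDirectSumProjections

variable {K L ι : Type*} [Field K] [LieRing L] [LieAlgebra K L]
  {g : ι → LieIdeal K L} {π : ι → L →ₗ[K] L} (hd : IsDirectSumProjections g π)
include hd

lemma eq_top_of_forall_le {N : Submodule K L} (h : ∀ i, (g i : Submodule K L) ≤ N) : N = ⊤ :=
  top_unique <| (LieSubmodule.iSup_toSubmodule_eq_top.mpr hd.iSup_eq_top).ge.trans (iSup_le h)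

lemma lie_eq_zero_of_ne {i k : ι} (hik : i ≠ k) {x y : L} (hx : x ∈ g i) (hy : y ∈ g k) :
    ⁅x, y⁆ = 0 := by
  rw [← hd.proj_eq_self i _ (lie_mem_left K L (g i) x y hx)]
  exact hd.proj_eq_zero i k hik.symm _ (LieSubmodule.lie_mem (g k) hy)

lemma linearMap_ext {V : Type*} [AddCommGroup V] [Module K V] {f f' : L →ₗ[K] V}
    (h : ∀ i, ∀ x ∈ g i, f x = f' x) : f = f' :=
  LinearMap.ext fun _ => (hd.eq_top_of_forall_le (N := LinearMap.eqLocus f f') h).ge trivial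

variable [Fintype ι]

lemma sum_proj : ∑ i, π i = LinearMap.id :=
  hd.linearMap_ext fun k x hx => by
    rw [LinearMap.sum_apply, Finset.sum_eq_single k
      (fun i _ hik => hd.proj_eq_zero i k (Ne.symm hik) x hx) (by simp), hd.proj_eq_self k x hx,
      LinearMap.id_apply]

lemma sum_proj_apply (x : L) : ∑ i, π i x = x := by
  rw [← LinearMap.sum_apply, hd.sum_proj, LinearMap.id_apply]

lemma proj_lie_of_mem {k : ι} {z : L} (hz : z ∈ g k) (y : L) : ⁅π k y, z⁆ = ⁅y, z⁆ := by
  conv_rhs => rw [← hd.sum_proj_apply y, sum_lie]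
  exact (Finset.sum_eq_single k (fun i _ hik => hd.lie_eq_zero_of_ne hik (hd.proj_mem i y) hz)
    (by simp)).symm

lemma map_lie (i : ι) (x y : L) : π i ⁅x, y⁆ = ⁅π i x, π i y⁆ := by
  calc π i ⁅x, y⁆ = ∑ k, π i ⁅π k x, π k y⁆ := by
        conv_lhs => rw [← hd.sum_proj_apply y, lie_sum, map_sum]
        simp only [hd.proj_lie_of_mem (hd.proj_mem _ y)]
    _ = π i ⁅π i x, π i y⁆ := Finset.sum_eq_single i (fun k _ hki => hd.proj_eq_zero i k hki _
          (LieSubmodule.lie_mem (g k) (hd.proj_mem k y))) (by simp)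
    _ = ⁅π i x, π i y⁆ := hd.proj_eq_self i _ (LieSubmodule.lie_mem (g i) (hd.proj_mem i y))

lemma mem_center_of_mem {k : ι} {z : L} (hz : z ∈ g k) (h : ∀ y ∈ g k, ⁅y, z⁆ = 0) :
    z ∈ center K L :=
  (LieModule.mem_maxTrivSubmodule K L L z).mpr fun y => by
    rw [← hd.proj_lie_of_mem hz, h _ (hd.proj_mem k y)]

lemma proj_mem_center {z : L} (hz : z ∈ center K L) (i : ι) : π i z ∈ center K L :=
  hd.mem_center_of_mem (hd.proj_mem i z) fun y hy => by
    rw [← hd.proj_eq_self i y hy, ← hd.map_lie, lie_eq_zero_of_mem_center_right hz, map_zero]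

lemma center_le_derivedSeries_one (hind : ∀ i, LieDirectlyIndecomposable K (g i))
    (hnonab : ∀ i, ¬ IsLieAbelian (g i)) : center K L ≤ derivedSeries K L 1 := by
  intro z hz
  rw [← hd.sum_proj_apply z]
  refine sum_mem fun i _ => ?_
  let w : g i := ⟨π i z, hd.proj_mem i z⟩
  have hw : w ∈ center K (g i) := (LieModule.mem_maxTrivSubmodule K (g i) (g i) w).mpr fun y =>
    Subtype.ext (lie_eq_zero_of_mem_center_right (hd.proj_mem_center hz i) y)
  exact (g i).incl.map_mem_derivedSeries ((hind i).center_le_derivedSeries_one (hnonab i) hw)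

end IsDirectSumProjections

section Splitting

variable {K L ι : Type*} [Field K] [LieRing L] [LieAlgebra K L]

def permPart (π : ι → L →ₗ[K] L) [Fintype ι] (σ : Equiv.Perm ι) (f : L →ₗ[K] L) : L →ₗ[K] L :=
  ∑ i, π (σ i) ∘ₗ f ∘ₗ π i

def IsPermCentralSplitting (g : ι → LieIdeal K L) (π : ι → L →ₗ[K] L) (Θ Ψ : L →ₗ[K] L)
    (σ : Equiv.Perm ι) : Prop :=
  (∀ i, Submodule.map Θ (g i : Submodule K L) = (g (σ i) : Submodule K L)) ∧
    (∀ x, Ψ x ∈ center K L) ∧ ∀ i, ∀ x ∈ g i, π (σ i) (Ψ x) = 0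

namespace IsDirectSumProjections

variable {g : ι → LieIdeal K L} {π : ι → L →ₗ[K] L} (hd : IsDirectSumProjections g π)
include hd

def block (f : L →ₗ⁅K⁆ L) (i j : ι) : g j →ₗ[K] g i :=
  (π i ∘ₗ (f : L →ₗ[K] L)).restrict fun _ _ => hd.proj_mem i _

lemma proj_add_of_isPermCentralSplitting {Θ Ψ : L →ₗ[K] L} {σ : Equiv.Perm ι}
    (h : IsPermCentralSplitting g π Θ Ψ σ) {i : ι} {x : L} (hx : x ∈ g i) :
    π (σ i) (Θ x + Ψ x) = Θ x := by
  rw [map_add, h.2.2 i x hx, add_zero,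
    hd.proj_eq_self _ _ ((h.1 i).le (Submodule.mem_map_of_mem hx))]

variable [Fintype ι]

lemma block_lie (f : L →ₗ⁅K⁆ L) (i j : ι) (x y : g j) :
    hd.block f i j ⁅x, y⁆ = ⁅hd.block f i j x, hd.block f i j y⁆ :=
  Subtype.ext <| (congrArg (π i) (f.map_lie x y)).trans (hd.map_lie i _ _)

lemma proj_mem_center_of_surjective {f : L →ₗ⁅K⁆ L} {i j k : ι}
    (hsurj : Function.Surjective (hd.block f k j)) (hij : i ≠ j) {x : L} (hx : x ∈ g i) :
    π k (f x) ∈ center K L :=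
  hd.mem_center_of_mem (hd.proj_mem k _) fun y hy => by
    obtain ⟨v, hv⟩ := hsurj ⟨y, hy⟩
    rw [show y = π k (f v) from (congrArg Subtype.val hv).symm, ← hd.map_lie, ← f.map_lie,
      hd.lie_eq_zero_of_ne hij.symm v.2 hx, map_zero, map_zero]

def returnMap (e : L ≃ₗ⁅K⁆ L) (i j : ι) : Module.End K (g i) :=
  hd.block e.symm i j ∘ₗ hd.block e j i

lemma sum_returnMap (e : L ≃ₗ⁅K⁆ L) (i : ι) : ∑ j, hd.returnMap e i j = 1 := by
  refine LinearMap.ext fun x => Subtype.ext ?_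
  calc ((∑ j, hd.returnMap e i j) x : L) = ∑ j, π i (e.symm (π j (e x))) := by
        rw [LinearMap.sum_apply, AddSubmonoidClass.coe_finsetSum]; rfl
    _ = x := by rw [← map_sum, ← map_sum, hd.sum_proj_apply, e.symm_apply_apply,
          hd.proj_eq_self i x x.2]

lemma returnMap_lie (e : L ≃ₗ⁅K⁆ L) (i j : ι) (x y : g i) :
    hd.returnMap e i j ⁅x, y⁆ = ⁅hd.returnMap e i j x, hd.returnMap e i j y⁆ := by
  simp only [returnMap, LinearMap.comp_apply, block_lie]

lemma lie_returnMap_eq_zero (e : L ≃ₗ⁅K⁆ L) (i : ι) {j k : ι} (hjk : j ≠ k) (x y : g i) :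
    ⁅hd.returnMap e i j x, hd.returnMap e i k y⁆ = 0 := by
  refine Subtype.ext ?_
  change ⁅π i (e.symm (π j (e x))), π i (e.symm (π k (e y)))⁆ = 0
  rw [← hd.map_lie, ← LieEquiv.map_lie,
    hd.lie_eq_zero_of_ne hjk (hd.proj_mem j _) (hd.proj_mem k _)]
  simp

lemma permPart_apply_of_mem (σ : Equiv.Perm ι) (f : L →ₗ[K] L) {i : ι} {x : L} (hx : x ∈ g i) :
    permPart π σ f x = π (σ i) (f x) := by
  rw [permPart, LinearMap.sum_apply, Finset.sum_eq_single i
    (fun k _ hki => by simp [hd.proj_eq_zero k i hki.symm x hx]) (by simp)]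
  simp [hd.proj_eq_self i x hx]

lemma map_lie_of_mem {f : L →ₗ[K] L}
    (h : ∀ i j, ∀ x ∈ g i, ∀ y ∈ g j, f ⁅x, y⁆ = ⁅f x, f y⁆) (x y : L) :
    f ⁅x, y⁆ = ⁅f x, f y⁆ := by
  calc f ⁅x, y⁆ = ∑ i, ∑ j, f ⁅π i x, π j y⁆ := by
        conv_lhs => rw [← hd.sum_proj_apply x, ← hd.sum_proj_apply y, sum_lie_sum]
        simp only [map_sum]
    _ = ∑ i, ∑ j, ⁅f (π i x), f (π j y)⁆ := by
        simp only [h _ _ _ (hd.proj_mem _ x) _ (hd.proj_mem _ y)]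
    _ = ⁅f x, f y⁆ := by rw [← sum_lie_sum, ← map_sum, ← map_sum, hd.sum_proj_apply,
          hd.sum_proj_apply]

lemma permPart_map_lie (σ : Equiv.Perm ι) (f : L →ₗ⁅K⁆ L) (x y : L) :
    permPart π σ f ⁅x, y⁆ = ⁅permPart π σ f x, permPart π σ f y⁆ := by
  refine hd.map_lie_of_mem (fun i j x hx y hy => ?_) x y
  rw [hd.permPart_apply_of_mem σ f hx, hd.permPart_apply_of_mem σ f hy]
  rcases eq_or_ne i j with rfl | hij
  · rw [hd.permPart_apply_of_mem σ f (lie_mem_right K L (g i) x y hy), LieHom.coe_toLinearMap,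
      f.map_lie, hd.map_lie]
  · rw [hd.lie_eq_zero_of_ne hij hx hy, map_zero,
      hd.lie_eq_zero_of_ne (σ.injective.ne hij) (hd.proj_mem _ _) (hd.proj_mem _ _)]

/-- Row `k` of blocks contains the surjective block in column `σ⁻¹ k`, and blocks of one row
from different columns commute. -/
lemma sub_permPart_mem_center {e : L →ₗ⁅K⁆ L} {σ : Equiv.Perm ι}
    (hsurj : ∀ i, Function.Surjective (hd.block e (σ i) i)) (x : L) :
    e x - permPart π σ e x ∈ center K L := by
  classical
  suffices (center K L).toSubmodule.comap ((e : L →ₗ[K] L) - permPart π σ e) = ⊤ from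
    this.ge trivial
  refine hd.eq_top_of_forall_le fun i x hx => ?_
  change e x - permPart π σ e x ∈ center K L
  have hsum : e x - π (σ i) (e x) = ∑ k ∈ Finset.univ.erase (σ i), π k (e x) := by
    rw [Finset.sum_erase_eq_sub (Finset.mem_univ _), hd.sum_proj_apply]
  rw [hd.permPart_apply_of_mem σ e hx, LieHom.coe_toLinearMap, hsum]
  refine sum_mem fun k hk => ?_
  obtain ⟨j, rfl⟩ := σ.surjective k
  exact hd.proj_mem_center_of_surjective (hsurj j)
    (fun hij => Finset.ne_of_mem_erase hk (congrArg σ hij.symm)) hx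

lemma map_permPart {e : L →ₗ⁅K⁆ L} {σ : Equiv.Perm ι}
    (hsurj : ∀ i, Function.Surjective (hd.block e (σ i) i)) (i : ι) :
    Submodule.map (permPart π σ e) (g i : Submodule K L) = (g (σ i) : Submodule K L) := by
  refine le_antisymm (Submodule.map_le_iff_le_comap.mpr fun x hx => ?_) fun y hy => ?_
  · change permPart π σ e x ∈ g (σ i)
    rw [hd.permPart_apply_of_mem σ e hx]
    exact hd.proj_mem _ _
  · obtain ⟨v, hv⟩ := hsurj i ⟨y, hy⟩
    exact ⟨v, v.2, (hd.permPart_apply_of_mem σ e v.2).trans (congrArg Subtype.val hv)⟩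

/-- If `σ i ≠ σ' i`, the second splitting would map the `i`-th summand onto `g (σ' i)` through
the central part of the first one. -/
lemma eq_of_isPermCentralSplitting (hnonab : ∀ i, ¬ IsLieAbelian (g i))
    {Θ Ψ Θ' Ψ' : L →ₗ[K] L} {σ σ' : Equiv.Perm ι} (h : IsPermCentralSplitting g π Θ Ψ σ)
    (h' : IsPermCentralSplitting g π Θ' Ψ' σ') (hadd : ∀ x, Θ x + Ψ x = Θ' x + Ψ' x) :
    Θ = Θ' := by
  have hσ (i : ι) : σ i = σ' i := by
    by_contra hne
    refine hnonab (σ' i) (abelian_of_le_center K L (g (σ' i)) fun y hy => ?_)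
    obtain ⟨x, hx, rfl⟩ : y ∈ Submodule.map Θ' (g i : Submodule K L) := (h'.1 i).ge hy
    rw [← hd.proj_add_of_isPermCentralSplitting h' hx, ← hadd, map_add,
      hd.proj_eq_zero _ _ hne _ ((h.1 i).le (Submodule.mem_map_of_mem hx)), zero_add]
    exact hd.proj_mem_center (h.2.1 x) _
  exact hd.linearMap_ext fun i x hx => by
    rw [← hd.proj_add_of_isPermCentralSplitting h hx, hadd, hσ,
      hd.proj_add_of_isPermCentralSplitting h' hx]

variable [FiniteDimensional K L] (hind : ∀ i, LieDirectlyIndecomposable K (g i))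
include hind

lemma existsUnique_bijective_returnMap (hnonab : ∀ i, ¬ IsLieAbelian (g i)) (e : L ≃ₗ⁅K⁆ L)
    (i : ι) : ∃! j, Function.Bijective (hd.returnMap e i j) :=
  existsUnique_bijective_of_sum_eq_one (hind i) (hnonab i) (hd.sum_returnMap e i)
    (hd.returnMap_lie e i) fun _ _ hjk => hd.lie_returnMap_eq_zero e i hjk

/-- `returnMap e.symm j i` and `returnMap e i j` are the two composites of the same pair of
blocks, so one is nilpotent iff the other is; by Fitting's lemma this transfers bijectivity. -/
lemma bijective_returnMap_symm (e : L ≃ₗ⁅K⁆ L) {i j : ι}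
    (h : Function.Bijective (hd.returnMap e i j)) :
    Function.Bijective (hd.returnMap e.symm j i) := by
  have hmem := mem_lieModuleEnd_of_sum_eq_one (hd.sum_returnMap e.symm j)
    (hd.returnMap_lie e.symm j) fun _ _ hkl => hd.lie_returnMap_eq_zero e.symm j hkl
  refine (isNilpotent_or_bijective_of_mem_lieModuleEnd
    (fun I J hIJ => (hind j).2 I J hIJ.inf_eq_bot hIJ.sup_eq_top) (hmem i)).resolve_left
    fun hnil => ?_
  have := (hind i).1
  exact (LinearMap.isNilpotent_comp_swap_s9 hnil).not_isUnit ((Module.End.isUnit_iff _).mpr h)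

lemma exists_perm_surjective_block (hnonab : ∀ i, ¬ IsLieAbelian (g i)) (e : L ≃ₗ⁅K⁆ L) :
    ∃ σ : Equiv.Perm ι, ∀ i, Function.Surjective (hd.block e (σ i) i) := by
  choose σ hσ using fun i => (hd.existsUnique_bijective_returnMap hind hnonab e i).exists
  have hback (i : ι) : Function.Bijective (hd.returnMap e.symm (σ i) i) :=
    hd.bijective_returnMap_symm hind e (hσ i)
  have hinj : Function.Injective σ := fun i i' hii' =>
    (hd.existsUnique_bijective_returnMap hind hnonab e.symm (σ i)).unique (hback i)
      (hii' ▸ hback i')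
  refine ⟨Equiv.ofBijective σ (Finite.injective_iff_bijective.mp hinj), fun i => ?_⟩
  have hsurj := (hback i).2
  rw [returnMap, LinearMap.coe_comp] at hsurj
  exact hsurj.of_comp

lemma exists_isPermCentralSplitting (hnonab : ∀ i, ¬ IsLieAbelian (g i)) {Φ : L →ₗ⁅K⁆ L}
    (hΦ : Function.Bijective Φ) :
    ∃ Θ Ψ : L →ₗ⁅K⁆ L, (∀ x, Φ x = Θ x + Ψ x) ∧ Function.Bijective Θ ∧
      ∃ σ, IsPermCentralSplitting g π Θ Ψ σ := by
  obtain ⟨σ, hsurj⟩ : ∃ σ : Equiv.Perm ι, ∀ i, Function.Surjective (hd.block Φ (σ i) i) :=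
    hd.exists_perm_surjective_block hind hnonab (LieEquiv.ofBijective Φ hΦ)
  let Θ : L →ₗ⁅K⁆ L := { permPart π σ Φ with map_lie' := hd.permPart_map_lie σ Φ _ _ }
  have hcent : ∀ x, Φ x - Θ x ∈ center K L := hd.sub_permPart_mem_center hsurj
  have hlie : ∀ x y, Φ ⁅x, y⁆ - Θ ⁅x, y⁆ = 0 := LieHom.sub_map_lie_eq_zero hcent
  let Ψ : L →ₗ⁅K⁆ L :=
    { (Φ : L →ₗ[K] L) - Θ with
      map_lie' := fun {x y} => (hlie x y).trans (lie_eq_zero_of_mem_center_right (hcent y) _).symm }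
  have hΘ : Function.Bijective Θ := by
    convert LieHom.bijective_add_of_center_le (Ψ := -(Ψ : L →ₗ[K] L))
      (fun x => neg_mem (hcent x)) (fun x y => neg_eq_zero.mpr (hlie x y))
      (hd.center_le_derivedSeries_one hind hnonab) hΦ using 1
    ext x
    simp [Ψ]
  refine ⟨Θ, Ψ, fun x => (add_sub_cancel _ _).symm, hΘ, σ, hd.map_permPart hsurj, hcent,
    fun i x hx => ?_⟩
  change π (σ i) (Φ x - permPart π σ Φ x) = 0
  rw [map_sub, hd.permPart_apply_of_mem σ Φ hx, hd.proj_eq_self _ _ (hd.proj_mem _ _),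
    LieHom.coe_toLinearMap, sub_self]

end IsDirectSumProjections

end Splitting

theorem stmt9_general {K L : Type*} [Field K] [LieRing L] [LieAlgebra K L]
    [FiniteDimensional K L] {r : ℕ}
    (g : Fin r → LieIdeal K L)
    (hsup : (⨆ i, g i) = ⊤)
    (hind : ∀ i, LieDirectlyIndecomposable K (g i))
    (hnonab : ∀ i, ¬ IsLieAbelian (g i))
    (π : Fin r → (L →ₗ[K] L))
    (hπmem : ∀ i x, π i x ∈ g i)
    (hπid : ∀ i, ∀ x ∈ g i, π i x = x)
    (hπzero : ∀ i k, k ≠ i → ∀ x ∈ g k, π i x = 0) :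
    (∀ Φ : L →ₗ⁅K⁆ L, Function.Bijective Φ →
      ∃! ΘΨ : (L →ₗ⁅K⁆ L) × (L →ₗ⁅K⁆ L),
        (∀ x : L, Φ x = ΘΨ.1 x + ΘΨ.2 x) ∧
        Function.Bijective ΘΨ.1 ∧
        ∃ σ : Equiv.Perm (Fin r),
          (∀ i, Submodule.map (ΘΨ.1 : L →ₗ[K] L) (g i : Submodule K L)
            = (g (σ i) : Submodule K L)) ∧
          (∀ x : L, ΘΨ.2 x ∈ LieAlgebra.center K L) ∧
          (∀ i, ∀ x ∈ g i, π (σ i) (ΘΨ.2 x) = 0)) ∧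
    (∀ Θ Ψ : L →ₗ⁅K⁆ L,
      Function.Bijective Θ →
      (∃ σ : Equiv.Perm (Fin r),
        (∀ i, Submodule.map (Θ : L →ₗ[K] L) (g i : Submodule K L)
          = (g (σ i) : Submodule K L)) ∧
        (∀ x : L, Ψ x ∈ LieAlgebra.center K L) ∧
        (∀ i, ∀ x ∈ g i, π (σ i) (Ψ x) = 0)) →
      ∃ e : L ≃ₗ⁅K⁆ L, ∀ x : L, e x = Θ x + Ψ x) := by
  have hd : IsDirectSumProjections g π := ⟨hsup, hπmem, hπid, hπzero⟩
  refine ⟨fun Φ hΦ => ?_, fun Θ Ψ hΘ ⟨_, _, hΨ, _⟩ =>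
    LieHom.exists_lieEquiv_add_of_center_le (hd.center_le_derivedSeries_one hind hnonab) hΘ hΨ⟩
  obtain ⟨Θ, Ψ, hadd, hΘ, σ, hsplit⟩ := hd.exists_isPermCentralSplitting hind hnonab hΦ
  refine ⟨(Θ, Ψ), ⟨hadd, hΘ, σ, hsplit⟩, ?_⟩
  rintro ⟨Θ', Ψ'⟩ ⟨hadd', -, σ', hsplit'⟩
  obtain rfl : Θ' = Θ := LieHom.ext <| LinearMap.congr_fun <|
    hd.eq_of_isPermCentralSplitting hnonab hsplit' hsplit fun x => (hadd' x).symm.trans (hadd x)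
  obtain rfl : Ψ' = Ψ := LieHom.ext fun x => add_left_cancel ((hadd' x).symm.trans (hadd x))
  rfl

/-- Let `L = L₁ ⊕ ⋯ ⊕ L_r` be a direct sum of finite-dimensional,
non-abelian, directly indecomposable Lie algebras (realized internally as Lie ideals `g i`,
with projections `π i`).  (1) Every Lie algebra automorphism `Φ` of `L` decomposes uniquely
as `Φ = Θ + Ψ` where `Θ` is a Lie algebra automorphism mapping each summand `g i` onto the
isomorphic summand `g (σ i)` for some permutation `σ`, `Ψ` is a central Lie algebra
endomorphism, and `π (σ i) (Ψ (g i)) = 0` for all `i`.  (2) Conversely, for any pair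
`(Θ, Ψ)` of Lie algebra endomorphisms satisfying these three conditions, the pointwise sum
`Θ + Ψ` is a Lie algebra automorphism of `L`. -/
theorem stmt9 {K L : Type*} [Field K] [LieRing L] [LieAlgebra K L]
    [FiniteDimensional K L] {r : ℕ}
    (g : Fin r → LieIdeal K L)
    (hsup : (⨆ i, g i) = ⊤)
    (hdisj : ∀ i, g i ⊓ (⨆ k, ⨆ _ : k ≠ i, g k) = ⊥)
    (hind : ∀ i, LieDirectlyIndecomposable K (g i))
    (hnonab : ∀ i, ¬ IsLieAbelian (g i))
    (π : Fin r → (L →ₗ[K] L))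
    (hπmem : ∀ i x, π i x ∈ g i)
    (hπid : ∀ i, ∀ x ∈ g i, π i x = x)
    (hπzero : ∀ i k, k ≠ i → ∀ x ∈ g k, π i x = 0) :
    (∀ Φ : L →ₗ⁅K⁆ L, Function.Bijective Φ →
      ∃! ΘΨ : (L →ₗ⁅K⁆ L) × (L →ₗ⁅K⁆ L),
        (∀ x : L, Φ x = ΘΨ.1 x + ΘΨ.2 x) ∧
        Function.Bijective ΘΨ.1 ∧
        ∃ σ : Equiv.Perm (Fin r),
          (∀ i, Submodule.map (ΘΨ.1 : L →ₗ[K] L) (g i : Submodule K L)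
            = (g (σ i) : Submodule K L)) ∧
          (∀ x : L, ΘΨ.2 x ∈ LieAlgebra.center K L) ∧
          (∀ i, ∀ x ∈ g i, π (σ i) (ΘΨ.2 x) = 0)) ∧
    (∀ Θ Ψ : L →ₗ⁅K⁆ L,
      Function.Bijective Θ →
      (∃ σ : Equiv.Perm (Fin r),
        (∀ i, Submodule.map (Θ : L →ₗ[K] L) (g i : Submodule K L)
          = (g (σ i) : Submodule K L)) ∧
        (∀ x : L, Ψ x ∈ LieAlgebra.center K L) ∧
        (∀ i, ∀ x ∈ g i, π (σ i) (Ψ x) = 0)) →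
      ∃ e : L ≃ₗ⁅K⁆ L, ∀ x : L, e x = Θ x + Ψ x) :=
  stmt9_general g hsup hind hnonab π hπmem hπid hπzero
end

section
/- Let G = G_1 × G_2 × … × G_r be a direct product of groups, let σ be a permutation of {1,…,r}, and for each i let φ_i : G_{σ^{-1}(i)} → G_i be a group homomorphism. Let φ : G → G be the endomorphism given by φ(x_1,…,x_r) = (φ_1(x_{σ^{-1}(1)}), …, φ_r(x_{σ^{-1}(r)})). Write σ = C_1 ∘ … ∘ C_s as a product of disjoint cycles, and for a cycle C_j = (i_1 i_2 … i_m) of σ (so σ(i_t) = i_{t+1} and σ(i_m) = i_1) define φ_{C_j} : G_{i_1} → G_{i_1} as the composition φ_{i_1} ∘ φ_{i_m} ∘ … ∘ φ_{i_3} ∘ φ_{i_2}. Then R(φ) = ∏_{j=1}^{s} R(φ_{C_j}), the product being taken in ℕ_{>0} ∪ {∞}. In particular, if σ is the identity permutation, then R(φ) = ∏_{i=1}^{r} R(φ_i). -/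
/-!
Every `Φ`-twisted class contains an element supported on the base points `b j`: solving
`z i = Φ(z) i * (x i)⁻¹` successively along each cycle kills all other coordinates. If two such
elements are conjugate by `z`, then `z` is `Φ`-invariant off the base points, so along the cycle
through `b j` it is determined by its value at `b j`, `z (σ^t (b j)) = Φ^t(z) (σ^t (b j))`;
the condition at `b j` then reads as twisted conjugacy by `Φ^{m j}` restricted to `G (b j)`,
which is `φ_{C_j}`. Conversely a `φ_{C_j}`-conjugator spreads along its cycle in the same way.
Hence the `Φ`-classes are in bijection with tuples of `φ_{C_j}`-classes.
-/

/-- The `φ`-twisted conjugacy relation: `x` and `y` are `φ`-twisted conjugate if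
`x = z * y * (φ z)⁻¹` for some `z`. -/
def twistedConj {G : Type*} [Group G] (φ : G →* G) (x y : G) : Prop :=
  ∃ z : G, x = z * y * (φ z)⁻¹

/-- The Reidemeister number `R(φ) ∈ ℕ_{>0} ∪ {∞}` of an endomorphism `φ`: the number of
`φ`-twisted conjugacy classes, with value `⊤` when there are infinitely many. -/
noncomputable def reidemeisterNumber {G : Type*} [Group G] (φ : G →* G) : ℕ∞ :=
  @ite _ (Finite (Quot (twistedConj φ))) (Classical.propDecidable _)
    ((Nat.card (Quot (twistedConj φ)) : ℕ∞)) ⊤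

/-- The canonical isomorphism `G i →* G j` induced by an equality of indices `i = j`. -/
def castMonoidHom {ι : Type*} (G : ι → Type*) [∀ i, Group (G i)] {i j : ι} (h : i = j) :
    G i →* G j where
  toFun x := h ▸ x
  map_one' := by subst h; rfl
  map_mul' x y := by subst h; rfl

/-- The composition `φ_{σ^t b} ∘ ⋯ ∘ φ_{σ² b} ∘ φ_{σ b} : G b →* G (σ^t b)` of the
component maps along the cycle of `σ` through `b`. -/
def cycleComp {r : ℕ} (G : Fin r → Type*) [∀ i, Group (G i)] (σ : Equiv.Perm (Fin r))
    (φ : ∀ i, G (σ⁻¹ i) →* G i) (b : Fin r) : (t : ℕ) → (G b →* G ((σ ^ t) b))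
  | 0 => castMonoidHom G (by simp)
  | t + 1 =>
      ((φ ((σ ^ (t + 1)) b)).comp
        (castMonoidHom G (show (σ ^ t) b = σ⁻¹ ((σ ^ (t + 1)) b) by
          simp [pow_succ', Equiv.Perm.mul_apply]))).comp (cycleComp G σ φ b t)

open Equiv

theorem ENat.card_pi {κ : Type*} [Fintype κ] (Q : κ → Type*) :
    ENat.card (∀ j, Q j) = ∏ j, ENat.card (Q j) := by
  simp [ENat.card, Cardinal.mk_pi, Cardinal.prod_eq_of_fintype, map_prod]

theorem twistedConj_equivalence {G : Type*} [Group G] (φ : G →* G) :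
    Equivalence (twistedConj φ) where
  refl x := ⟨1, by simp⟩
  symm := by
    rintro x y ⟨z, rfl⟩
    exact ⟨z⁻¹, by simp [mul_assoc]⟩
  trans := by
    rintro x y u ⟨z, rfl⟩ ⟨w, rfl⟩
    exact ⟨z * w, by simp [mul_assoc]⟩

def twistedSetoid {G : Type*} [Group G] (φ : G →* G) : Setoid G :=
  ⟨twistedConj φ, twistedConj_equivalence φ⟩

theorem reidemeisterNumber_eq_card {G : Type*} [Group G] (φ : G →* G) :
    reidemeisterNumber φ = ENat.card (Quot (twistedConj φ)) := by
  unfold reidemeisterNumber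
  split_ifs with h
  · exact (ENat.card_eq_coe_natCard _).symm
  · have := not_finite_iff_infinite.mp h
    exact ENat.card_eq_top_of_infinite.symm

theorem reidemeisterNumber_eq_prod_of_forall_twistedConj {G : Type*} [Group G] {κ : Type*}
    [Fintype κ] {H : κ → Type*} [∀ j, Group (H j)] {Φ : G →* G} {ψ : ∀ j, H j →* H j}
    (e : (∀ j, H j) → G) (he : ∀ x, ∃ g, twistedConj Φ (e g) x)
    (hiff : ∀ g h, twistedConj Φ (e g) (e h) ↔ ∀ j, twistedConj (ψ j) (g j) (h j)) :
    reidemeisterNumber Φ = ∏ j, reidemeisterNumber (ψ j) := by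
  let f : Quotient (@piSetoid _ _ fun j => twistedSetoid (ψ j)) → Quotient (twistedSetoid Φ) :=
    Quotient.map' e fun g h => (hiff g h).mpr
  have hf : Function.Bijective f := by
    refine ⟨?_, ?_⟩
    · rintro ⟨g⟩ ⟨h⟩ hgh
      exact Quotient.sound ((hiff g h).mp (Quotient.exact hgh))
    · rintro ⟨x⟩
      obtain ⟨g, hg⟩ := he x
      exact ⟨⟦g⟧, Quotient.sound hg⟩
  simp only [reidemeisterNumber_eq_card, ← ENat.card_pi]
  exact (ENat.card_congr ((Setoid.piQuotientEquiv _).trans (Equiv.ofBijective f hf))).symm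

section PermutationShaped

variable {ι : Type*} {G : ι → Type*} [∀ i, Group (G i)] {σ : Perm ι}
  {φ : ∀ i, G (σ⁻¹ i) →* G i} {Φ : (∀ i, G i) →* ∀ i, G i}

theorem twistedConj_pi_iff {x y : ∀ i, G i} :
    twistedConj Φ x y ↔ ∃ z : ∀ i, G i, ∀ i, x i = z i * y i * (Φ z i)⁻¹ := by
  simp only [twistedConj, funext_iff, Pi.mul_apply, Pi.inv_apply]

theorem map_diag_apply (hΦ : ∀ x i, Φ x i = φ i (x (σ⁻¹ i))) (f : ℕ → ∀ i, G i) (d : ι → ℕ)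
    (i : ι) : Φ (fun k => f (d k) k) i = Φ (f (d (σ⁻¹ i))) i := by
  rw [hΦ, hΦ]

theorem map_iterate_diag_apply (hΦ : ∀ x i, Φ x i = φ i (x (σ⁻¹ i))) (u : ∀ i, G i)
    (d : ι → ℕ) (i : ι) : Φ (fun k => Φ^[d k] u k) i = Φ^[d (σ⁻¹ i) + 1] u i := by
  rw [map_diag_apply hΦ (fun n => Φ^[n] u), Function.iterate_succ_apply']

theorem eq_iterate_depth_apply (hΦ : ∀ x i, Φ x i = φ i (x (σ⁻¹ i))) {d : ι → ℕ}
    (hd : ∀ i, d i ≠ 0 → d (σ⁻¹ i) + 1 = d i) {z : ∀ i, G i} (hz : ∀ i, d i ≠ 0 → z i = Φ z i) :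
    z = fun i => Φ^[d i] z i := by
  suffices ∀ n i, d i = n → z i = Φ^[n] z i from funext fun i => this _ i rfl
  intro n
  induction n with
  | zero => simp
  | succ n ih =>
    intro i hi
    have hi' : d (σ⁻¹ i) = n := by have := hd i (by omega); omega
    rw [hz i (by omega), Function.iterate_succ_apply', hΦ, hΦ, ← ih _ hi']

theorem exists_twistedConj_eq_one_of_depth_ne_zero (hΦ : ∀ x i, Φ x i = φ i (x (σ⁻¹ i)))
    {d : ι → ℕ} (hd : ∀ i, d i ≠ 0 → d (σ⁻¹ i) + 1 = d i) (x : ∀ i, G i) :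
    ∃ y, twistedConj Φ y x ∧ ∀ i, d i ≠ 0 → y i = 1 := by
  -- iterating `w ↦ Φ w * x⁻¹` `d i` times gives `z i = Φ z i * (x i)⁻¹` wherever `d i ≠ 0`
  let f : ℕ → ∀ i, G i := fun n => (fun w => Φ w * x⁻¹)^[n] 1
  let z : ∀ i, G i := fun i => f (d i) i
  refine ⟨z * x * (Φ z)⁻¹, ⟨z, rfl⟩, fun i hi => ?_⟩
  have hz : z i = Φ (f (d (σ⁻¹ i))) i * (x i)⁻¹ := by
    change f (d i) i = _
    rw [← hd i hi]
    exact congrFun (Function.iterate_succ_apply' _ _ _) i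
  rw [Pi.mul_apply, Pi.mul_apply, Pi.inv_apply, hz, map_diag_apply hΦ f d i,
    inv_mul_cancel_right, mul_inv_cancel]

end PermutationShaped

theorem castMonoidHom_apply_eval {ι : Type*} {G : ι → Type*} [∀ i, Group (G i)] (x : ∀ i, G i)
    {i j : ι} (h : i = j) : castMonoidHom G h (x i) = x j := by
  subst h; rfl

theorem castMonoidHom_apply_of_eq {ι α : Type*} {G : ι → Type*} [∀ i, Group (G i)] (f : α → ι)
    (g : ∀ a, G (f a)) {a a' : α} (e : a = a') (h : f a = f a') :
    castMonoidHom G h (g a) = g a' := by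
  subst e; rfl

structure CyclePosition {ι κ : Type*} (σ : Perm ι) (b : κ → ι) (m : κ → ℕ) where
  cycle : ι → κ
  depth : ι → ℕ
  depth_lt (i : ι) : depth i < m (cycle i)
  pow_depth_apply (i : ι) : (σ ^ depth i) (b (cycle i)) = i
  cycle_pow_apply {j : κ} {t : ℕ} : t < m j → cycle ((σ ^ t) (b j)) = j
  depth_pow_apply {j : κ} {t : ℕ} : t < m j → depth ((σ ^ t) (b j)) = t

namespace CyclePosition

variable {ι κ : Type*} {σ : Perm ι} {b : κ → ι} {m : κ → ℕ}

noncomputable def ofExistsUnique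
    (hcover : ∀ i, ∃! p : κ × ℕ, p.2 < m p.1 ∧ (σ ^ p.2) (b p.1) = i) : CyclePosition σ b m where
  cycle i := (hcover i).choose.1
  depth i := (hcover i).choose.2
  depth_lt i := (hcover i).choose_spec.1.1
  pow_depth_apply i := (hcover i).choose_spec.1.2
  cycle_pow_apply ht := congrArg Prod.fst ((hcover _).choose_spec.2 (_, _) ⟨ht, rfl⟩).symm
  depth_pow_apply ht := congrArg Prod.snd ((hcover _).choose_spec.2 (_, _) ⟨ht, rfl⟩).symm

variable (P : CyclePosition σ b m)

theorem cycle_base {j : κ} (hm : 0 < m j) : P.cycle (b j) = j := by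
  simpa using P.cycle_pow_apply hm

theorem depth_base {j : κ} (hm : 0 < m j) : P.depth (b j) = 0 := by
  simpa using P.depth_pow_apply hm

theorem base_of_depth_eq_zero {i : ι} (hi : P.depth i = 0) : b (P.cycle i) = i := by
  simpa [hi] using P.pow_depth_apply i

theorem depth_inv_apply_add_one (i : ι) (hi : P.depth i ≠ 0) :
    P.depth (σ⁻¹ i) + 1 = P.depth i := by
  obtain ⟨t, ht⟩ := Nat.exists_eq_succ_of_ne_zero hi
  have hinv : σ⁻¹ i = (σ ^ t) (b (P.cycle i)) := by
    have h := P.pow_depth_apply i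
    rw [ht, pow_succ', Perm.mul_apply] at h
    exact Perm.inv_eq_iff_eq.mpr h.symm
  rw [hinv, P.depth_pow_apply (by have := P.depth_lt i; omega), ht]

theorem depth_inv_base_add_one {j : κ} (hm : 0 < m j) (hcycle : (σ ^ m j) (b j) = b j) :
    P.depth (σ⁻¹ (b j)) + 1 = m j := by
  have hinv : σ⁻¹ (b j) = (σ ^ (m j - 1)) (b j) := by
    rw [Perm.inv_eq_iff_eq, ← Perm.mul_apply, ← pow_succ', Nat.sub_add_cancel hm, hcycle]
  rw [hinv, P.depth_pow_apply (by omega), Nat.sub_add_cancel hm]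

variable {G : ι → Type*} [∀ i, Group (G i)]

def baseEmb (g : ∀ j, G (b j)) : ∀ i, G i := fun i =>
  if h : P.depth i = 0 then castMonoidHom G (P.base_of_depth_eq_zero h) (g (P.cycle i)) else 1

theorem baseEmb_apply_base (g : ∀ j, G (b j)) {j : κ} (hm : 0 < m j) :
    P.baseEmb g (b j) = g j := by
  rw [baseEmb, dif_pos (P.depth_base hm)]
  exact castMonoidHom_apply_of_eq b g (P.cycle_base hm) _

theorem baseEmb_apply_of_depth_ne_zero (g : ∀ j, G (b j)) {i : ι} (hi : P.depth i ≠ 0) :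
    P.baseEmb g i = 1 :=
  dif_neg hi

theorem baseEmb_restrict {y : ∀ i, G i} (hy : ∀ i, P.depth i ≠ 0 → y i = 1) :
    P.baseEmb (fun j => y (b j)) = y := by
  funext i
  by_cases hi : P.depth i = 0
  · rw [baseEmb, dif_pos hi]
    exact castMonoidHom_apply_eval y _
  · rw [P.baseEmb_apply_of_depth_ne_zero _ hi, hy i hi]

end CyclePosition

section CycleDecomposition

variable {ι κ : Type*} {G : ι → Type*} [∀ i, Group (G i)] {σ : Perm ι}
  {φ : ∀ i, G (σ⁻¹ i) →* G i} {Φ : (∀ i, G i) →* ∀ i, G i} {b : κ → ι} {m : κ → ℕ}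

theorem exists_twistedConj_baseEmb (hΦ : ∀ x i, Φ x i = φ i (x (σ⁻¹ i)))
    (P : CyclePosition σ b m) (x : ∀ i, G i) : ∃ g, twistedConj Φ (P.baseEmb g) x := by
  obtain ⟨y, hyx, hy⟩ := exists_twistedConj_eq_one_of_depth_ne_zero hΦ
    P.depth_inv_apply_add_one x
  exact ⟨fun j => y (b j), by rwa [P.baseEmb_restrict hy]⟩

theorem twistedConj_baseEmb_iff (hΦ : ∀ x i, Φ x i = φ i (x (σ⁻¹ i))) (hm : ∀ j, 0 < m j)
    (hcycle : ∀ j, (σ ^ m j) (b j) = b j) (P : CyclePosition σ b m)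
    {ψ : ∀ j, G (b j) →* G (b j)} (hψ : ∀ j x, ψ j (x (b j)) = Φ^[m j] x (b j))
    (g h : ∀ j, G (b j)) :
    twistedConj Φ (P.baseEmb g) (P.baseEmb h) ↔ ∀ j, twistedConj (ψ j) (g j) (h j) := by
  rw [twistedConj_pi_iff]
  constructor
  · rintro ⟨z, hz⟩ j
    have hfix : ∀ i, P.depth i ≠ 0 → z i = Φ z i := fun i hi => by
      have h := hz i
      rwa [P.baseEmb_apply_of_depth_ne_zero _ hi, P.baseEmb_apply_of_depth_ne_zero _ hi,
        mul_one, eq_comm, mul_inv_eq_one] at h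
    have hzb : Φ z (b j) = ψ j (z (b j)) := by
      calc Φ z (b j) = Φ (fun i => Φ^[P.depth i] z i) (b j) := by
            rw [← eq_iterate_depth_apply hΦ P.depth_inv_apply_add_one hfix]
        _ = Φ^[m j] z (b j) := by
            rw [map_iterate_diag_apply hΦ, P.depth_inv_base_add_one (hm j) (hcycle j)]
        _ = ψ j (z (b j)) := (hψ j z).symm
    refine ⟨z (b j), ?_⟩
    simpa only [P.baseEmb_apply_base _ (hm j), hzb] using hz (b j)
  · intro hgh
    choose w hw using hgh
    -- spread each `w j` along its cycle
    refine ⟨fun i => Φ^[P.depth i] (P.baseEmb w) i, fun i => ?_⟩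
    rw [map_iterate_diag_apply hΦ]
    dsimp only
    by_cases hi : P.depth i = 0
    · obtain ⟨j, rfl⟩ : ∃ j, b j = i := ⟨_, P.base_of_depth_eq_zero hi⟩
      rw [hi, P.depth_inv_base_add_one (hm j) (hcycle j), ← hψ, Function.iterate_zero_apply,
        P.baseEmb_apply_base _ (hm j), P.baseEmb_apply_base _ (hm j), P.baseEmb_apply_base _ (hm j)]
      exact hw j
    · rw [P.depth_inv_apply_add_one i hi, P.baseEmb_apply_of_depth_ne_zero _ hi,
        P.baseEmb_apply_of_depth_ne_zero _ hi, mul_one, mul_inv_cancel]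

end CycleDecomposition

theorem cycleComp_apply {r : ℕ} {G : Fin r → Type*} [∀ i, Group (G i)] {σ : Perm (Fin r)}
    {φ : ∀ i, G (σ⁻¹ i) →* G i} {Φ : (∀ i, G i) →* ∀ i, G i}
    (hΦ : ∀ x i, Φ x i = φ i (x (σ⁻¹ i))) (x : ∀ i, G i) (c : Fin r) (t : ℕ) :
    cycleComp G σ φ c t (x c) = Φ^[t] x ((σ ^ t) c) := by
  induction t with
  | zero => exact castMonoidHom_apply_eval x _
  | succ t ih =>
    rw [cycleComp, MonoidHom.comp_apply, MonoidHom.comp_apply, ih, Function.iterate_succ_apply',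
      hΦ]
    exact congrArg _ (castMonoidHom_apply_eval _ _)

theorem reidemeisterNumber_eq_prod_cycles {r : ℕ} (G : Fin r → Type*) [∀ i, Group (G i)]
    (σ : Perm (Fin r)) (φ : ∀ i, G (σ⁻¹ i) →* G i) (Φ : (∀ i, G i) →* (∀ i, G i))
    (hΦ : ∀ (x : ∀ i, G i) (i : Fin r), Φ x i = φ i (x (σ⁻¹ i)))
    {s : ℕ} (b : Fin s → Fin r) (m : Fin s → ℕ) (hm : ∀ j, 1 ≤ m j)
    (hcycle : ∀ j, (σ ^ m j) (b j) = b j)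
    (hcover : ∀ i : Fin r, ∃! p : Fin s × ℕ, p.2 < m p.1 ∧ (σ ^ p.2) (b p.1) = i) :
    reidemeisterNumber Φ =
      ∏ j : Fin s, reidemeisterNumber
        ((castMonoidHom G (hcycle j)).comp (cycleComp G σ φ (b j) (m j))) := by
  let P := CyclePosition.ofExistsUnique hcover
  refine reidemeisterNumber_eq_prod_of_forall_twistedConj P.baseEmb
    (exists_twistedConj_baseEmb hΦ P) (twistedConj_baseEmb_iff hΦ hm hcycle P fun j x => ?_)
  rw [MonoidHom.comp_apply, cycleComp_apply hΦ]
  exact castMonoidHom_apply_eval _ _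

/-- **product formula for Reidemeister numbers of permutation-shaped
endomorphisms.**  Let `G = G₁ × ⋯ × G_r`, `σ` a permutation of the indices, and
`Φ (x₁, …, x_r) = (φ₁ x_{σ⁻¹ 1}, …, φ_r x_{σ⁻¹ r})`.  Given a decomposition of `σ` into
disjoint cycles, described by base points `b j` and lengths `m j` (`j = 1, …, s`) whose
orbits `{σ^t (b j) : t < m j}` partition the index set, one has
`R(Φ) = ∏ⱼ R(φ_{C_j})` where `φ_{C_j}` is the composition of the component maps along the
`j`-th cycle.  In particular, if `σ = 1`, then `R(Φ) = ∏ᵢ R(φ_i)`. -/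
theorem stmt14 {r : ℕ} (G : Fin r → Type*) [∀ i, Group (G i)]
    (σ : Equiv.Perm (Fin r)) (φ : ∀ i, G (σ⁻¹ i) →* G i)
    (Φ : (∀ i, G i) →* (∀ i, G i))
    (hΦ : ∀ (x : ∀ i, G i) (i : Fin r), Φ x i = φ i (x (σ⁻¹ i)))
    (s : ℕ) (b : Fin s → Fin r) (m : Fin s → ℕ)
    (hm : ∀ j, 1 ≤ m j)
    (hcycle : ∀ j, (σ ^ m j) (b j) = b j)
    (hcover : ∀ i : Fin r, ∃! p : Fin s × ℕ, p.2 < m p.1 ∧ (σ ^ p.2) (b p.1) = i) :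
    reidemeisterNumber Φ =
      ∏ j : Fin s, reidemeisterNumber
        ((castMonoidHom G (hcycle j)).comp (cycleComp G σ φ (b j) (m j))) ∧
    ∀ hσ : σ = 1, reidemeisterNumber Φ =
      ∏ i : Fin r, reidemeisterNumber
        ((φ i).comp (castMonoidHom G (show i = σ⁻¹ i by simp [hσ]))) := by
  refine ⟨reidemeisterNumber_eq_prod_cycles G σ φ Φ hΦ b m hm hcycle hcover, fun hσ => ?_⟩
  subst hσ
  have hcover₁ : ∀ i : Fin r, ∃! p : Fin r × ℕ, p.2 < 1 ∧ ((1 : Perm (Fin r)) ^ p.2) p.1 = i := by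
    intro i
    refine ⟨(i, 0), ⟨Nat.one_pos, rfl⟩, ?_⟩
    rintro ⟨k, t⟩ ⟨ht, hk⟩
    obtain rfl : t = 0 := Nat.lt_one_iff.mp ht
    simp_all
  rw [reidemeisterNumber_eq_prod_cycles G 1 φ Φ hΦ id (fun _ => 1) (fun _ => le_rfl) (by simp)
    hcover₁]
  rfl
end

section
/- Let Γ = ℤ² ⋊ ℤ be the semidirect product where the generator t of ℤ acts on ℤ² by v ↦ −v, with elements written as pairs (v,k), v ∈ ℤ², k ∈ ℤ, and multiplication (v,k)·(w,ℓ) = (v + (−1)^k w, k+ℓ). Let φ : Γ → Γ be given by φ(v,k) = (Mv, −k) where M is the 2×2 integer matrix with rows (0,1), (−1,0). Then: φ is an automorphism of Γ; the center of Γ is Z(Γ) = {(0,k) : k even}; the Reidemeister numbers satisfy R(φ) = 4, R(φ|_{Z(Γ)}) = 2, and R(φ̄) = 4 where φ̄ is the induced automorphism of Γ/Z(Γ). In particular R(φ) ≠ R(φ|_{Z(Γ)}) · R(φ̄), so the product formula for Reidemeister numbers fails for this torsion-free polycyclic group. -/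
/-- The action of `ℤ` (written multiplicatively) on `ℤ²` (written multiplicatively) where
the generator acts by `v ↦ -v`. -/
abbrev negAction : Multiplicative ℤ →* MulAut (Multiplicative (ℤ × ℤ)) :=
  zpowersHom (MulAut (Multiplicative (ℤ × ℤ))) (MulEquiv.inv (Multiplicative (ℤ × ℤ)))

/-- `Γ = ℤ² ⋊ ℤ`, the generator `t` of `ℤ` acting on `ℤ²` by `v ↦ -v`. -/
abbrev Gamma15 : Type := Multiplicative (ℤ × ℤ) ⋊[negAction] Multiplicative ℤ

/-- The element `(v, k)` of `Γ = ℤ² ⋊ ℤ`. -/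
abbrev Gamma15.pair (v : ℤ × ℤ) (k : ℤ) : Gamma15 :=
  ⟨Multiplicative.ofAdd v, Multiplicative.ofAdd k⟩

section TwistedConjugacy

variable {G : Type*} [Group G]

theorem twistedConj_iff_mul_eq (φ : G →* G) (x y : G) :
    twistedConj φ x y ↔ ∃ z, x * φ z = z * y := by
  simp only [twistedConj, eq_mul_inv_iff_mul_eq]

theorem MonoidHom.eq_of_twistedConj {A : Type*} [CommGroup A] {φ : G →* G} (f : G →* A)
    (hf : ∀ g, f (φ g) = f g) {x y : G} (h : twistedConj φ x y) : f x = f y := by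
  obtain ⟨z, rfl⟩ := h
  simp only [map_mul, map_inv, hf]
  exact mul_inv_cancel_comm (f z) (f y)

theorem twistedConj.map {H : Type*} [Group H] {φ : G →* G} {ψ : H →* H} (π : G →* H)
    (hπ : ∀ g, ψ (π g) = π (φ g)) {x y : G} (h : twistedConj φ x y) :
    twistedConj ψ (π x) (π y) := by
  obtain ⟨z, rfl⟩ := h
  exact ⟨π z, by simp only [map_mul, map_inv, hπ]⟩

theorem reidemeisterNumber_eq_natCard {β : Type*} [Finite β] (φ : G →* G) (f : G → β)
    (hf : Function.Surjective f) (h : ∀ x y, twistedConj φ x y ↔ f x = f y) :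
    reidemeisterNumber φ = Nat.card β := by
  have e : Quot (twistedConj φ) ≃ β := by
    rw [show twistedConj φ = (Setoid.ker f).r from funext₂ fun x y => propext (h x y)]
    exact Setoid.quotientKerEquivOfSurjective f hf
  have : Finite (Quot (twistedConj φ)) := .of_equiv _ e.symm
  rw [reidemeisterNumber, if_pos this, Nat.card_congr e]

end TwistedConjugacy

theorem intCast_negOnePow_zmod_two (k : ℤ) : ((k.negOnePow : ℤ) : ZMod 2) = 1 := by
  rcases Int.units_eq_one_or k.negOnePow with h | h <;> simp [h]

theorem exists_sub_smul_rot_eq (ε : ℤˣ) {d : ℤ × ℤ} (hd : Even (d.1 + d.2)) :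
    ∃ u : ℤ × ℤ, u - (ε : ℤ) • (u.2, -u.1) = d := by
  obtain ⟨t, ht⟩ := hd
  rcases Int.units_eq_one_or ε with rfl | rfl
  · exact ⟨(t, d.2 - t), Prod.ext (by simp; omega) (by simp)⟩
  · exact ⟨(d.1 - t, t), Prod.ext (by simp) (by simp; omega)⟩

namespace Gamma15

@[elab_as_elim]
theorem induction_on {P : Gamma15 → Prop} (g : Gamma15) (h : ∀ v k, P (pair v k)) : P g :=
  h g.left.toAdd g.right.toAdd

theorem pair_inj {v w : ℤ × ℤ} {k l : ℤ} : pair v k = pair w l ↔ v = w ∧ k = l := by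
  simp [SemidirectProduct.ext_iff]

theorem negAction_apply (k : ℤ) (x : Multiplicative (ℤ × ℤ)) :
    negAction (.ofAdd k) x = x ^ (k.negOnePow : ℤ) := by
  rw [zpowersHom_apply, toAdd_ofAdd]
  induction k using Int.induction_on generalizing x with
  | zero => simp
  | succ n ih =>
    rw [zpow_add_one, MulAut.mul_apply, ih, Int.negOnePow_succ]
    simp [zpow_neg]
  | pred n ih =>
    rw [zpow_sub_one, MulAut.mul_apply, ih, Int.negOnePow_sub]
    simp [zpow_neg]

theorem pair_mul_pair (v w : ℤ × ℤ) (k l : ℤ) :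
    pair v k * pair w l = pair (v + (k.negOnePow : ℤ) • w) (k + l) := by
  ext : 1
  · simp only [SemidirectProduct.mul_left, negAction_apply]
    rfl
  · rfl

def phi : Gamma15 ≃* Gamma15 where
  toFun g := pair (g.left.toAdd.2, -g.left.toAdd.1) (-g.right.toAdd)
  invFun g := pair (-g.left.toAdd.2, g.left.toAdd.1) (-g.right.toAdd)
  left_inv g := by induction g using induction_on; simp
  right_inv g := by induction g using induction_on; simp
  map_mul' g h := by
    induction g using induction_on with | h v k => ?_
    induction h using induction_on with | h w l => ?_
    simp only [pair_mul_pair, toAdd_ofAdd, Int.negOnePow_neg, pair_inj]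
    generalize (k.negOnePow : ℤ) = s
    refine ⟨Prod.ext ?_ ?_, ?_⟩ <;> simp <;> ring

theorem phi_pair (v : ℤ × ℤ) (k : ℤ) : phi (pair v k) = pair (v.2, -v.1) (-k) := rfl

def parity : Gamma15 →* Multiplicative (ZMod 2 × ZMod 2) :=
  MonoidHom.mk'
    (fun g => .ofAdd (((g.right.toAdd : ℤ) : ZMod 2),
      ((g.left.toAdd.1 + g.left.toAdd.2 : ℤ) : ZMod 2)))
    (fun g h => by
      induction g using induction_on with | h v k => ?_
      induction h using induction_on with | h w l => ?_
      simp only [pair_mul_pair, toAdd_ofAdd, ← ofAdd_add, EmbeddingLike.apply_eq_iff_eq,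
        Prod.mk_add_mk, Prod.mk.injEq, Prod.fst_add, Prod.snd_add, Prod.smul_fst, Prod.smul_snd,
        smul_eq_mul]
      push_cast [intCast_negOnePow_zmod_two]
      constructor <;> ring)

theorem parity_pair (v : ℤ × ℤ) (k : ℤ) :
    parity (pair v k) = .ofAdd ((k : ZMod 2), ((v.1 + v.2 : ℤ) : ZMod 2)) := rfl

theorem parity_phi (g : Gamma15) : parity (phi g) = parity g := by
  induction g using induction_on with | h v k => ?_
  simp only [phi_pair, parity_pair, EmbeddingLike.apply_eq_iff_eq, Prod.mk.injEq,
    ZMod.intCast_eq_intCast_iff']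
  omega

theorem parity_surjective : Function.Surjective parity := by
  intro p
  obtain ⟨k, hk⟩ := ZMod.intCast_surjective p.toAdd.1
  obtain ⟨n, hn⟩ := ZMod.intCast_surjective p.toAdd.2
  exact ⟨pair (n, 0) k, by rw [parity_pair]; simp [hk, hn]⟩

theorem twistedConj_phi_iff (x y : Gamma15) :
    twistedConj phi.toMonoidHom x y ↔ parity x = parity y := by
  refine ⟨MonoidHom.eq_of_twistedConj parity parity_phi, fun h => ?_⟩
  induction x using induction_on with | h a k => ?_
  induction y using induction_on with | h w l => ?_
  simp only [parity_pair, EmbeddingLike.apply_eq_iff_eq, Prod.mk.injEq,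
    ZMod.intCast_eq_intCast_iff'] at h
  obtain ⟨m, hm⟩ : ∃ m, k = l + 2 * m := ⟨(k - l) / 2, by omega⟩
  have hd : Even ((a - (m.negOnePow : ℤ) • w).1 + (a - (m.negOnePow : ℤ) • w).2) := by
    rcases Int.units_eq_one_or m.negOnePow with hs | hs <;>
      simp only [hs, Prod.fst_sub, Prod.snd_sub, Prod.smul_fst, Prod.smul_snd, smul_eq_mul,
        Units.val_one, Units.val_neg, one_mul, neg_mul] <;>
      exact Int.even_iff.2 (by omega)
  obtain ⟨u, hu⟩ := exists_sub_smul_rot_eq k.negOnePow hd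
  refine (twistedConj_iff_mul_eq _ _ _).2 ⟨pair u m, ?_⟩
  simp only [MulEquiv.coe_toMonoidHom, phi_pair, pair_mul_pair, pair_inj]
  constructor
  · linear_combination (norm := module) -hu
  · omega

theorem pair_mem_center_iff (v : ℤ × ℤ) (k : ℤ) :
    pair v k ∈ Subgroup.center Gamma15 ↔ v = 0 ∧ Even k := by
  rw [Subgroup.mem_center_iff]
  constructor
  · intro h
    have ht := h (pair 0 1)
    have hx := h (pair (1, 0) 0)
    rw [pair_mul_pair, pair_mul_pair, pair_inj] at ht hx
    simp only [Int.negOnePow_one, Int.negOnePow_zero, Units.val_neg, Units.val_one, neg_smul,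
      one_smul, smul_zero, zero_add, add_zero, Prod.ext_iff, Prod.fst_add, Prod.snd_add,
      Prod.smul_fst, Prod.smul_snd, Prod.fst_neg, Prod.snd_neg, smul_eq_mul, mul_one] at ht hx
    obtain ⟨⟨h1, h2⟩, -⟩ := ht
    obtain ⟨⟨hs, -⟩, -⟩ := hx
    refine ⟨Prod.ext (by simp; omega) (by simp; omega), (Int.negOnePow_eq_one_iff k).1 ?_⟩
    exact Units.ext (by simp only [Units.val_one]; omega)
  · rintro ⟨rfl, hk⟩ g
    induction g using induction_on with | h w l => ?_
    rw [pair_mul_pair, pair_mul_pair, Int.negOnePow_even k hk, pair_inj]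
    simp [add_comm]

theorem mem_center_iff (g : Gamma15) : g ∈ Subgroup.center Gamma15 ↔
    (g.left = 1 ∧ ∃ m : ℤ, g.right = Multiplicative.ofAdd (2 * m)) := by
  induction g using induction_on with | h v k => ?_
  rw [pair_mem_center_iff, even_iff_exists_two_mul]
  exact Iff.rfl

@[elab_as_elim]
theorem center_induction_on {P : Subgroup.center Gamma15 → Prop} (x : Subgroup.center Gamma15)
    (h : ∀ k (hk : Even k), P ⟨pair 0 k, (pair_mem_center_iff 0 k).2 ⟨rfl, hk⟩⟩) : P x := by
  obtain ⟨g, hg⟩ := x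
  induction g using induction_on with | h v k => ?_
  obtain ⟨rfl, hk⟩ := (pair_mem_center_iff v k).1 hg
  exact h k hk

-- The `k`-coordinate of a central element is even, so the division is exact.
def centerParity (x : Subgroup.center Gamma15) : ZMod 2 :=
  (((x : Gamma15).right.toAdd / 2 : ℤ) : ZMod 2)

theorem centerParity_surjective : Function.Surjective centerParity := by
  intro q
  obtain ⟨m, rfl⟩ := ZMod.intCast_surjective q
  exact ⟨⟨pair 0 (2 * m), (pair_mem_center_iff _ _).2 ⟨rfl, even_two_mul m⟩⟩,
    by simp [centerParity]⟩

theorem twistedConj_center_iff (φZ : Subgroup.center Gamma15 →* Subgroup.center Gamma15)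
    (hφZ : ∀ x, (φZ x : Gamma15) = phi x) (x y : Subgroup.center Gamma15) :
    twistedConj φZ x y ↔ centerParity x = centerParity y := by
  induction x using center_induction_on with | h kx hkx => ?_
  induction y using center_induction_on with | h ky hky => ?_
  obtain ⟨a, rfl⟩ := hkx
  obtain ⟨b, rfl⟩ := hky
  simp only [twistedConj_iff_mul_eq, Subtype.ext_iff, Subgroup.coe_mul, hφZ, centerParity,
    ZMod.intCast_eq_intCast_iff', toAdd_ofAdd]
  constructor
  · rintro ⟨z, hz⟩
    induction z using center_induction_on with | h kz hkz => ?_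
    obtain ⟨c, rfl⟩ := hkz
    rw [phi_pair, pair_mul_pair, pair_mul_pair, pair_inj] at hz
    omega
  · intro h
    refine ⟨⟨pair 0 (a - b), (pair_mem_center_iff _ _).2 ⟨rfl, Int.even_iff.2 (by omega)⟩⟩, ?_⟩
    rw [phi_pair, pair_mul_pair, pair_mul_pair, pair_inj]
    exact ⟨by simp, by ring⟩

theorem center_le_ker_parity : Subgroup.center Gamma15 ≤ parity.ker := by
  intro g hg
  induction g using induction_on with | h v k => ?_
  obtain ⟨rfl, m, rfl⟩ := (pair_mem_center_iff v k).1 hg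
  rw [MonoidHom.mem_ker, parity_pair, ofAdd_eq_one, Prod.mk_eq_zero,
    ZMod.intCast_zmod_eq_zero_iff_dvd, ZMod.intCast_zmod_eq_zero_iff_dvd]
  simp only [Prod.fst_zero, Prod.snd_zero, add_zero, Nat.cast_ofNat, dvd_zero, and_true]
  omega

def parityBar : Gamma15 ⧸ Subgroup.center Gamma15 →* Multiplicative (ZMod 2 × ZMod 2) :=
  QuotientGroup.lift _ parity center_le_ker_parity

theorem twistedConj_quotient_iff
    (φbar : Gamma15 ⧸ Subgroup.center Gamma15 →* Gamma15 ⧸ Subgroup.center Gamma15)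
    (hφbar : ∀ x : Gamma15, φbar (QuotientGroup.mk x) = QuotientGroup.mk (phi x))
    (p q : Gamma15 ⧸ Subgroup.center Gamma15) :
    twistedConj φbar p q ↔ parityBar p = parityBar q := by
  refine ⟨MonoidHom.eq_of_twistedConj parityBar fun p => ?_, fun h => ?_⟩
  · induction p using QuotientGroup.induction_on with | H g => ?_
    rw [hφbar]
    exact parity_phi g
  · induction p using QuotientGroup.induction_on with | H a => ?_
    induction q using QuotientGroup.induction_on with | H b => ?_
    exact ((twistedConj_phi_iff a b).2 h).map (QuotientGroup.mk' _) hφbar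

theorem parityBar_surjective : Function.Surjective parityBar := fun p =>
  let ⟨g, hg⟩ := parity_surjective p
  ⟨g, hg⟩

end Gamma15

/-- For `Γ = ℤ² ⋊ ℤ` (the generator acting by `v ↦ -v`, multiplication
`(v,k)·(w,ℓ) = (v + (-1)^k w, k + ℓ)`) and `φ(v,k) = (Mv, -k)` with `M = [[0,1],[-1,0]]`:
`φ` is an automorphism, `Z(Γ) = {(0,k) : k even}`, `R(φ) = 4`, `R(φ|_{Z(Γ)}) = 2` and
`R(φ̄) = 4`; in particular `R(φ) ≠ R(φ|_{Z(Γ)}) · R(φ̄)`, so the product formula for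
Reidemeister numbers fails. -/
theorem stmt15 (φ : Gamma15 →* Gamma15)
    (hφ : ∀ (v : ℤ × ℤ) (k : ℤ),
      φ (Gamma15.pair v k) = Gamma15.pair (v.2, -v.1) (-k))
    (φZ : ↥(Subgroup.center Gamma15) →* ↥(Subgroup.center Gamma15))
    (hφZ : ∀ x : ↥(Subgroup.center Gamma15), (φZ x : Gamma15) = φ (x : Gamma15))
    (φbar : Gamma15 ⧸ Subgroup.center Gamma15 →* Gamma15 ⧸ Subgroup.center Gamma15)
    (hφbar : ∀ x : Gamma15, φbar (QuotientGroup.mk x) = QuotientGroup.mk (φ x)) :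
    (∀ (v w : ℤ × ℤ) (k l : ℤ),
      Gamma15.pair v k * Gamma15.pair w l
        = Gamma15.pair (v + (((-1 : ℤˣ) ^ k : ℤˣ) : ℤ) • w) (k + l)) ∧
    Function.Bijective φ ∧
    (∀ g : Gamma15, g ∈ Subgroup.center Gamma15 ↔
      (g.left = 1 ∧ ∃ m : ℤ, g.right = Multiplicative.ofAdd (2 * m))) ∧
    reidemeisterNumber φ = 4 ∧
    reidemeisterNumber φZ = 2 ∧
    reidemeisterNumber φbar = 4 ∧
    reidemeisterNumber φ ≠ reidemeisterNumber φZ * reidemeisterNumber φbar := by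
  obtain rfl : φ = Gamma15.phi.toMonoidHom :=
    MonoidHom.ext fun g => by induction g using Gamma15.induction_on with | h v k => exact hφ v k
  have hR : reidemeisterNumber Gamma15.phi.toMonoidHom = 4 := by
    rw [reidemeisterNumber_eq_natCard _ Gamma15.parity Gamma15.parity_surjective
      Gamma15.twistedConj_phi_iff]
    simp
  have hRZ : reidemeisterNumber φZ = 2 := by
    rw [reidemeisterNumber_eq_natCard _ Gamma15.centerParity
      Gamma15.centerParity_surjective (Gamma15.twistedConj_center_iff φZ hφZ)]
    simp
  have hRbar : reidemeisterNumber φbar = 4 := by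
    rw [reidemeisterNumber_eq_natCard _ Gamma15.parityBar Gamma15.parityBar_surjective
      (Gamma15.twistedConj_quotient_iff φbar hφbar)]
    simp
  refine ⟨Gamma15.pair_mul_pair, Gamma15.phi.bijective, Gamma15.mem_center_iff,
    hR, hRZ, hRbar, ?_⟩
  rw [hR, hRZ, hRbar]
  decide
end

section
/- Let A ∈ GL₄(ℤ) be the matrix with rows (1,0,1,0), (0,1,0,1), (0,0,3,2), (0,0,4,3), and let Γ = ℤ⁴ ⋊_A ℤ be the semidirect product in which the generator of ℤ acts on ℤ⁴ by A. Then Γ is directly indecomposable: whenever Γ is the internal direct product of two subgroups Γ_1 and Γ_2 (i.e. both normal, intersecting trivially, and generating Γ), one of Γ_1, Γ_2 is the trivial subgroup. -/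
/-!
The matrix `A` fixes `ℤ² × 0` and acts on the quotient `ℤ²` by `!![3, 2; 4, 3]`, whose eigenvalue
`λ = 3 + 2√2` is not a root of unity; the eigenform `f v = √2 v₂ + v₃` satisfies `f (A v) = λ f v`.
Let `Γ` be the internal direct product of `Γ₁` and `Γ₂`.

If both factors contain elements `g₁, g₂` with nonzero `ℤ`-coordinates `k₁, k₂`, then for `u ∈ ℤ⁴`
the commutator `[u, g₁] = u - A^k₁ u` lies in `Γ₁`, so it commutes with `g₂` and is fixed by
`A^k₂`. Hence `f` vanishes on it, while `f (u - A^k₁ u) = (1 - λ^k₁) f u ≠ 0` for suitable `u`.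

Otherwise one factor, say `Γ₂`, lies in `ℤ⁴`. It centralizes an element of `Γ₁` with coordinate `1`,
so it consists of `A`-fixed vectors `(a, b, 0, 0)`, each of the form `2u + (A - 1)w`: a square times
a commutator in `Γ`. As `Γ ⧸ Γ₁ ≅ Γ₂` is abelian, every element of `Γ₂` is a square in `Γ₂`,
and a subgroup of `ℤ⁴` in which every element is divisible by every `2ⁿ` is trivial.
-/

open SemidirectProduct Multiplicative
open scoped commutatorElement

theorem Subgroup.exists_mem_eq_sq_of_eq_sq_mul_commutatorElement {G : Type*} [Group G]
    {H K : Subgroup G} [H.Normal]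
    (hinf : H ⊓ K = ⊥) (hsup : H ⊔ K = ⊤) (hK : ∀ x ∈ K, ∀ y ∈ K, Commute x y)
    {z n t m : G} (hz : z ∈ K) (h : z = n ^ 2 * ⁅t, m⁆) : ∃ b ∈ K, z = b ^ 2 := by
  set π := QuotientGroup.mk' H
  have hπH (g : G) : π g = 1 ↔ g ∈ H := by rw [← MonoidHom.mem_ker, QuotientGroup.ker_mk']
  have hmod (g : G) : ∃ b ∈ K, π g = π b := by
    have hg : g ∈ ((H ⊔ K : Subgroup G) : Set G) := by rw [hsup]; trivial
    rw [Subgroup.normal_mul] at hg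
    obtain ⟨a, ha, b, hb, rfl⟩ := hg
    exact ⟨b, hb, by rw [map_mul, (hπH a).2 ha, one_mul]⟩
  obtain ⟨b, hb, hnb⟩ := hmod n
  obtain ⟨k₁, hk₁, htk⟩ := hmod t
  obtain ⟨k₂, hk₂, hmk⟩ := hmod m
  have hπ : π (z * (b ^ 2)⁻¹) = 1 := by
    rw [h, map_mul, map_inv, map_mul, map_commutatorElement, htk, hmk, ← map_commutatorElement,
      commutatorElement_eq_one_iff_commute.2 (hK k₁ hk₁ k₂ hk₂), map_pow, map_pow, hnb, map_one]
    group
  have : z * (b ^ 2)⁻¹ ∈ H ⊓ K := ⟨(hπH _).1 hπ, K.mul_mem hz (K.inv_mem (K.pow_mem hb 2))⟩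
  rw [hinf, Subgroup.mem_bot, mul_inv_eq_one] at this
  exact ⟨b, hb, this⟩

theorem MulAut.apply_zpow_eq_zpow_mul {M K : Type*} [Mul M] [CommGroupWithZero K] (τ : MulAut M)
    {g : M → K} {c : K} (hc : c ≠ 0) (hg : ∀ x, g (τ x) = c * g x) (k : ℤ) (x : M) :
    g ((τ ^ k) x) = c ^ k * g x := by
  induction k using Int.induction_on generalizing x with
  | zero => simp
  | succ k ih => rw [zpow_add_one, MulAut.mul_apply, ih, hg, zpow_add_one₀ hc, mul_assoc]
  | pred k ih =>
    have hinv : g (τ⁻¹ x) = c⁻¹ * g x := by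
      rw [eq_inv_mul_iff_mul_eq₀ hc, ← hg, MulAut.apply_inv_self]
    rw [zpow_sub_one, MulAut.mul_apply, ih, hinv, zpow_sub_one₀ hc, mul_assoc]

namespace SemidirectProduct

section

variable {N G : Type*} [Group N] [Group G] {φ : G →* MulAut N}

theorem eq_inl_left {x : N ⋊[φ] G} (h : x.right = 1) : x = inl x.left := by
  rw [← inl_left_mul_inr_right x, h, map_one, mul_one, left_inl]

theorem commutatorElement_inr_inl (g : G) (w : N) :
    ⁅(inr g : N ⋊[φ] G), (inl w : N ⋊[φ] G)⁆ = inl (φ g w * w⁻¹) := by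
  rw [commutatorElement_def, ← map_inv, ← inl_aut, ← map_inv, ← map_mul]

end

section

variable {N G : Type*} [CommGroup N] [Group G] {φ : G →* MulAut N}

theorem apply_right_eq_of_commute {n : N} {g : N ⋊[φ] G} (h : Commute (inl n) g) :
    φ g.right n = n := by
  have h1 := congrArg SemidirectProduct.left h.eq
  simp only [mul_left, left_inl, right_inl, map_one, MulAut.one_apply] at h1
  rw [mul_comm] at h1
  exact (mul_left_cancel h1).symm

theorem commutatorElement_inl (u : N) (g : N ⋊[φ] G) :
    ⁅(inl u : N ⋊[φ] G), g⁆ = inl (u * (φ g.right u)⁻¹) := by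
  ext
  · simp [commutatorElement_def, mul_comm, mul_left_comm]
  · simp [commutatorElement_def]

theorem commute_of_right_eq_one {p q : N ⋊[φ] G} (hp : p.right = 1) (hq : q.right = 1) :
    Commute p q := by
  ext
  · simp [hp, hq, mul_comm]
  · simp [hp, hq]

end

theorem eq_bot_of_forall_mem_exists_sq {V G : Type*} [AddCommGroup V] [Group G]
    {φ : G →* MulAut (Multiplicative V)} (hdiv : ∀ v : V, (∀ n : ℕ, ∃ w, v = 2 ^ n • w) → v = 0)
    {K : Subgroup (Multiplicative V ⋊[φ] G)} (hker : ∀ z ∈ K, z.right = 1)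
    (hsq : ∀ z ∈ K, ∃ b ∈ K, z = b ^ 2) : K = ⊥ := by
  have hpow (n : ℕ) : ∀ z ∈ K, ∃ b ∈ K, z = b ^ 2 ^ n := by
    induction n with
    | zero => exact fun z hz => ⟨z, hz, by rw [pow_zero, pow_one]⟩
    | succ n ih =>
      intro z hz
      obtain ⟨b, hb, rfl⟩ := hsq z hz
      obtain ⟨c, hc, rfl⟩ := ih b hb
      exact ⟨c, hc, by rw [← pow_mul, pow_succ]⟩
  refine (Subgroup.eq_bot_iff_forall K).2 fun z hz => ?_
  suffices toAdd z.left = 0 by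
    rw [eq_inl_left (hker z hz), ← ofAdd_toAdd z.left, this, ofAdd_zero, map_one]
  refine hdiv _ fun n => ?_
  obtain ⟨b, hb, hzb⟩ := hpow n z hz
  refine ⟨toAdd b.left, ?_⟩
  rw [hzb, eq_inl_left (hker b hb), ← map_pow, left_inl, toAdd_pow, left_inl]

end SemidirectProduct

theorem Pi.eq_zero_of_forall_exists_eq_two_pow_nsmul {ι : Type*} {v : ι → ℤ}
    (h : ∀ n : ℕ, ∃ w, v = 2 ^ n • w) : v = 0 := by
  funext i
  by_contra hi
  obtain ⟨n, hn⟩ := (Int.finiteMultiplicity_iff (a := 2)).2 ⟨by norm_num, hi⟩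
  obtain ⟨w, hw⟩ := h (n + 1)
  exact hn ⟨w i, by simp [hw]⟩

namespace MappingTorus

variable {V : Type*} [AddCommGroup V] (σ : AddAut V)

local notation "Γσ" => Multiplicative V ⋊[zpowersHom (MulAut (Multiplicative V))
  (AddEquiv.toMultiplicative σ)] Multiplicative ℤ

theorem map_toAdd_zpowersHom_apply (f : V →+ ℝ) {c : ℝ} (hc : c ≠ 0)
    (hf : ∀ v, f (σ v) = c * f v) (k : Multiplicative ℤ) (x : Multiplicative V) :
    f (toAdd (zpowersHom _ (AddEquiv.toMultiplicative σ) k x)) = c ^ toAdd k * f (toAdd x) := by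
  rw [zpowersHom_apply]
  exact MulAut.apply_zpow_eq_zpow_mul _ (g := fun x => f (toAdd x)) hc (fun x => hf (toAdd x)) _ x

theorem forall_right_eq_one_or_forall_right_eq_one (f : V →+ ℝ) (hf₀ : f ≠ 0) {c : ℝ}
    (hc : 1 < c) (hf : ∀ v, f (σ v) = c * f v) {Γ₁ Γ₂ : Subgroup Γσ} (h₁ : Γ₁.Normal)
    (h₂ : Γ₂.Normal) (hinf : Γ₁ ⊓ Γ₂ = ⊥) :
    (∀ z ∈ Γ₁, z.right = 1) ∨ ∀ z ∈ Γ₂, z.right = 1 := by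
  by_contra! ⟨⟨g₁, hg₁, hk₁⟩, ⟨g₂, hg₂, hk₂⟩⟩
  have hc₀ : c ≠ 0 := by positivity
  have hpow : ∀ {k : Multiplicative ℤ}, c ^ toAdd k = 1 → k = 1 := fun h =>
    toAdd.injective (zpow_right_injective₀ (by positivity) hc.ne' (h.trans (zpow_zero c).symm))
  obtain ⟨u, hu⟩ : ∃ u, f u ≠ 0 := by simpa [DFunLike.ne_iff] using hf₀
  set w := ofAdd u * (zpowersHom _ (AddEquiv.toMultiplicative σ) g₁.right (ofAdd u))⁻¹
  have hw₁ : inl w ∈ Γ₁ := by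
    rw [← commutatorElement_inl, commutatorElement_def]
    exact Γ₁.mul_mem (h₁.conj_mem g₁ hg₁ _) (Γ₁.inv_mem hg₁)
  have hw : zpowersHom _ (AddEquiv.toMultiplicative σ) g₂.right w = w :=
    apply_right_eq_of_commute <|
      Subgroup.commute_of_normal_of_disjoint Γ₁ Γ₂ h₁ h₂ (disjoint_iff.2 hinf) _ _ hw₁ hg₂
  have hfw : f (toAdd w) = 0 := by
    have := map_toAdd_zpowersHom_apply σ f hc₀ hf g₂.right w
    rw [hw] at this
    by_contra hne
    exact hk₂ (hpow (mul_right_cancel₀ hne (this.symm.trans (one_mul _).symm)))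
  have : f (toAdd w) = (1 - c ^ toAdd g₁.right) * f u := by
    simp only [w, toAdd_mul, toAdd_inv, map_add, map_neg, map_toAdd_zpowersHom_apply σ f hc₀ hf,
      toAdd_ofAdd]
    ring
  rw [hfw, eq_comm, mul_eq_zero, sub_eq_zero] at this
  exact this.elim (fun h => hk₁ (hpow h.symm)) hu

theorem forall_mem_exists_sq (hfix : ∀ w, σ w = w → ∃ u w', w = 2 • u + (σ w' - w'))
    {Γ₁ Γ₂ : Subgroup Γσ} (h₁ : Γ₁.Normal) (h₂ : Γ₂.Normal) (hinf : Γ₁ ⊓ Γ₂ = ⊥)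
    (hsup : Γ₁ ⊔ Γ₂ = ⊤) (hker : ∀ z ∈ Γ₂, z.right = 1) : ∀ z ∈ Γ₂, ∃ b ∈ Γ₂, z = b ^ 2 := by
  obtain ⟨g₁, hg₁, hg₁r⟩ : ∃ g₁ ∈ Γ₁, g₁.right = ofAdd 1 := by
    have : inr (ofAdd 1) ∈ ((Γ₁ ⊔ Γ₂ : Subgroup Γσ) : Set Γσ) := by rw [hsup]; trivial
    rw [Subgroup.normal_mul] at this
    obtain ⟨a, ha, b, hb, hab⟩ := this
    refine ⟨a, ha, ?_⟩
    simpa [hker b hb] using congrArg SemidirectProduct.right hab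
  intro z hz
  have hzl : z = inl z.left := eq_inl_left (hker z hz)
  have hσz : σ (toAdd z.left) = toAdd z.left := by
    have hcomm :=
      Subgroup.commute_of_normal_of_disjoint Γ₁ Γ₂ h₁ h₂ (disjoint_iff.2 hinf) _ _ hg₁ hz
    rw [hzl] at hcomm
    have := congrArg toAdd (apply_right_eq_of_commute hcomm.symm)
    simpa [hg₁r] using this
  obtain ⟨u, w', hw⟩ := hfix _ hσz
  refine Subgroup.exists_mem_eq_sq_of_eq_sq_mul_commutatorElement hinf hsup
    (fun x hx y hy => commute_of_right_eq_one (hker x hx) (hker y hy)) hz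
    (n := inl (ofAdd u)) (t := inr (ofAdd 1)) (m := inl (ofAdd w')) ?_
  rw [commutatorElement_inr_inl, ← map_pow, ← map_mul, hzl]
  congr 1
  apply toAdd.injective
  simp [hw, sub_eq_add_neg]

theorem eq_bot_of_forall_right_eq_one (hfix : ∀ w, σ w = w → ∃ u w', w = 2 • u + (σ w' - w'))
    (hdiv : ∀ v : V, (∀ n : ℕ, ∃ w, v = 2 ^ n • w) → v = 0)
    {Γ₁ Γ₂ : Subgroup Γσ} (h₁ : Γ₁.Normal) (h₂ : Γ₂.Normal) (hinf : Γ₁ ⊓ Γ₂ = ⊥)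
    (hsup : Γ₁ ⊔ Γ₂ = ⊤) (hker : ∀ z ∈ Γ₂, z.right = 1) : Γ₂ = ⊥ :=
  SemidirectProduct.eq_bot_of_forall_mem_exists_sq hdiv hker
    (forall_mem_exists_sq σ hfix h₁ h₂ hinf hsup hker)

end MappingTorus

section

open scoped Matrix

local notation "A₀" => !![1, 0, 1, 0; 0, 1, 0, 1; 0, 0, 3, 2; 0, 0, 4, 3]

theorem mulVec_A₀ (v : Fin 4 → ℤ) :
    A₀ *ᵥ v = ![v 0 + v 2, v 1 + v 3, 3 * v 2 + 2 * v 3, 4 * v 2 + 3 * v 3] := by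
  ext i
  fin_cases i <;> simp [Matrix.mulVec, dotProduct, Fin.sum_univ_four]

noncomputable def eigenform : (Fin 4 → ℤ) →+ ℝ :=
  AddMonoidHom.mk' (fun v => √2 * v 2 + v 3) fun v w => by simp only [Pi.add_apply]; push_cast; ring

theorem eigenform_mulVec (v : Fin 4 → ℤ) : eigenform (A₀ *ᵥ v) = (3 + 2 * √2) * eigenform v := by
  have h2 : √2 * √2 = 2 := Real.mul_self_sqrt zero_le_two
  rw [mulVec_A₀]
  simp only [eigenform, AddMonoidHom.mk'_apply, Matrix.cons_val, Int.cast_add, Int.cast_mul,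
    Int.cast_ofNat]
  linear_combination (-2 * (v 2 : ℝ)) * h2

theorem eigenform_ne_zero : eigenform ≠ 0 :=
  DFunLike.ne_iff.2 ⟨Pi.single 3 1, by simp [eigenform]⟩

theorem exists_eq_two_nsmul_add_mulVec_sub {w : Fin 4 → ℤ} (hw : A₀ *ᵥ w = w) :
    ∃ u w', w = 2 • u + (A₀ *ᵥ w' - w') := by
  rw [mulVec_A₀] at hw
  have h2 : w 2 = 0 := by simpa using congrFun hw 0
  have h3 : w 3 = 0 := by simpa using congrFun hw 1
  refine ⟨![0, 0, -(w 0 + w 1), -(2 * w 0 + w 1)], ![0, 0, w 0, w 1], ?_⟩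
  rw [mulVec_A₀]
  ext i
  fin_cases i <;> simp [h2, h3] <;> ring

end

/-- Let `A ∈ GL₄(ℤ)` be the matrix with rows `(1,0,1,0)`, `(0,1,0,1)`,
`(0,0,3,2)`, `(0,0,4,3)` (realized as an additive automorphism `α` of `ℤ⁴` with
`α v = A v`), and let `Γ = ℤ⁴ ⋊_A ℤ` be the corresponding semidirect product.  Then `Γ` is
directly indecomposable: it is nontrivial, and whenever `Γ` is the internal direct product
of two normal subgroups `Γ₁`, `Γ₂` (trivial intersection, generating `Γ`), one of `Γ₁`,
`Γ₂` is trivial. -/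
theorem stmt16 (A : Matrix (Fin 4) (Fin 4) ℤ)
    (hA : A = !![1, 0, 1, 0; 0, 1, 0, 1; 0, 0, 3, 2; 0, 0, 4, 3])
    (α : AddAut (Fin 4 → ℤ)) (hα : ∀ v : Fin 4 → ℤ, α v = A.mulVec v) :
    Nontrivial
      (Multiplicative (Fin 4 → ℤ)
        ⋊[zpowersHom (MulAut (Multiplicative (Fin 4 → ℤ))) (AddEquiv.toMultiplicative α)]
        Multiplicative ℤ) ∧
    ∀ Γ₁ Γ₂ : Subgroup
      (Multiplicative (Fin 4 → ℤ)
        ⋊[zpowersHom (MulAut (Multiplicative (Fin 4 → ℤ))) (AddEquiv.toMultiplicative α)]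
        Multiplicative ℤ),
      Γ₁.Normal → Γ₂.Normal → Γ₁ ⊓ Γ₂ = ⊥ → Γ₁ ⊔ Γ₂ = ⊤ → Γ₁ = ⊥ ∨ Γ₂ = ⊥ := by
  subst hA
  refine ⟨rightHom_surjective.nontrivial, fun Γ₁ Γ₂ h₁ h₂ hinf hsup => ?_⟩
  have hfix (w : Fin 4 → ℤ) (hw : α w = w) : ∃ u w', w = 2 • u + (α w' - w') := by
    simp only [hα] at hw ⊢
    exact exists_eq_two_nsmul_add_mulVec_sub hw
  have hc : (1 : ℝ) < 3 + 2 * √2 := by linarith [Real.sqrt_nonneg 2]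
  rcases MappingTorus.forall_right_eq_one_or_forall_right_eq_one α eigenform eigenform_ne_zero hc
      (fun v => hα v ▸ eigenform_mulVec v) h₁ h₂ hinf with hker | hker
  · exact .inl <| MappingTorus.eq_bot_of_forall_right_eq_one α hfix
      (fun _ => Pi.eq_zero_of_forall_exists_eq_two_pow_nsmul) h₂ h₁ (by rwa [inf_comm])
      (by rwa [sup_comm]) hker
  · exact .inr <| MappingTorus.eq_bot_of_forall_right_eq_one α hfix
      (fun _ => Pi.eq_zero_of_forall_exists_eq_two_pow_nsmul) h₁ h₂ hinf hsup hker
end
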